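/- arXiv:1606.03566 — 7 statements merged into one kernel-verified Lean document; each statement's English description precedes it below -/
import Mathlib

section
/- The vertices of the chain polytope C_P are exactly the indicator vectors ρ(A) of antichains A of P. -/
def chainPolytope {d : ℕ} (r : Fin d → Fin d → Prop) : Set (Fin d → ℝ) :=
  {x | (∀ i, 0 ≤ x i) ∧
    ∀ c : Finset (Fin d), IsMaxChain r (c : Set (Fin d)) → ∑ i ∈ c, x i ≤ 1}

/- ### Auxiliary: telescoping sums over finite sets of reals -/

noncomputable def prevS (S : Finset ℝ) (b : ℝ) : ℝ :=
  if h : (S.filter (fun a => a < b)).Nonempty then (S.filter (fun a => a < b)).max' h else 0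

lemma prevS_spec {S : Finset ℝ} {u b : ℝ} (hu : u ∈ S) (hub : u < b) :
    prevS S b ∈ S ∧ prevS S b < b ∧ u ≤ prevS S b := by
  have hne : (S.filter (fun a => a < b)).Nonempty := ⟨u, Finset.mem_filter.2 ⟨hu, hub⟩⟩
  rw [prevS, dif_pos hne]
  have h1 := Finset.max'_mem _ hne
  have h2 := Finset.le_max' (S.filter (fun a => a < b)) u (Finset.mem_filter.2 ⟨hu, hub⟩)
  simp only [Finset.mem_filter] at h1
  exact ⟨h1.1, h1.2, h2⟩

lemma telescope (S : Finset ℝ) : ∀ (n : ℕ) (u v : ℝ), u ∈ S → v ∈ S → u ≤ v →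
    (S.filter (fun b => u < b ∧ b ≤ v)).card = n →
    ∑ b ∈ S.filter (fun b => u < b ∧ b ≤ v), (b - prevS S b) = v - u := by
  intro n
  induction n using Nat.strong_induction_on with
  | _ n ih =>
    intro u v hu hv huv hcard
    rcases eq_or_lt_of_le huv with rfl | hlt
    · have hempty : S.filter (fun b => u < b ∧ b ≤ u) = ∅ := by
        ext b
        simp only [Finset.mem_filter, Finset.notMem_empty, iff_false, not_and]
        intro _ h1 h2
        exact absurd h2 (not_le.2 h1)
      rw [hempty]
      simp
    · obtain ⟨hpS, hpv, hup⟩ := prevS_spec hu hlt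
      have hvnot : v ∉ S.filter (fun b => u < b ∧ b ≤ prevS S v) := by
        simp only [Finset.mem_filter, not_and]
        intro _ _
        exact not_le.2 hpv
      have hset : S.filter (fun b => u < b ∧ b ≤ v)
          = insert v (S.filter (fun b => u < b ∧ b ≤ prevS S v)) := by
        ext b
        simp only [Finset.mem_insert, Finset.mem_filter]
        constructor
        · rintro ⟨hbS, hub, hbv⟩
          rcases eq_or_lt_of_le hbv with rfl | hlt'
          · exact Or.inl rfl
          · exact Or.inr ⟨hbS, hub, (prevS_spec hbS hlt').2.2⟩
        · rintro (hbv | ⟨hbS, hub, hbp⟩)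
          · subst hbv
            exact ⟨hv, hlt, le_rfl⟩
          · exact ⟨hbS, hub, le_trans hbp (le_of_lt hpv)⟩
      have hcard' : (S.filter (fun b => u < b ∧ b ≤ prevS S v)).card < n := by
        rw [hset, Finset.card_insert_of_notMem hvnot] at hcard
        omega
      rw [hset, Finset.sum_insert hvnot,
        ih _ hcard' u (prevS S v) hu hpS hup rfl]
      ring

lemma sum_slice (B : Finset ℝ) (u v : ℝ) (hu : u ∈ B) (hv : v ∈ B) (huv : u ≤ v)
    (h0 : 0 ≤ u) (h1 : v ≤ 1) :
    ∑ b ∈ B.filter (fun b => 0 < b ∧ b ≤ 1),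
      (if u < b ∧ b ≤ v then (b - prevS B b) else 0) = v - u := by
  rw [← Finset.sum_filter, Finset.filter_filter]
  have heq : B.filter (fun b => (0 < b ∧ b ≤ 1) ∧ u < b ∧ b ≤ v)
      = B.filter (fun b => u < b ∧ b ≤ v) := by
    apply Finset.filter_congr
    intro b _
    constructor
    · rintro ⟨-, h⟩
      exact h
    · rintro ⟨hub, hbv⟩
      exact ⟨⟨lt_of_le_of_lt h0 hub, le_trans hbv h1⟩, hub, hbv⟩
  rw [heq]
  exact telescope B _ u v hu hv huv rfl

/- ### Auxiliary facts about the chain polytope -/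

lemma le_one_of_mem {d : ℕ} {P : PartialOrder (Fin d)} {x : Fin d → ℝ}
    (hx : x ∈ chainPolytope P.le) (i : Fin d) : x i ≤ 1 := by
  have hch : IsChain P.le ({i} : Set (Fin d)) := Set.subsingleton_singleton.isChain
  obtain ⟨M, hM, hsub⟩ := hch.exists_maxChain
  have hfin : M.Finite := Set.toFinite M
  have h1 := hx.2 hfin.toFinset (by rwa [Set.Finite.coe_toFinset])
  have hi : i ∈ hfin.toFinset := by
    rw [Set.Finite.mem_toFinset]
    exact hsub rfl
  have h2 := Finset.single_le_sum (f := x) (fun j _ => hx.1 j) hi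
  linarith

lemma indicator_mem {d : ℕ} {P : PartialOrder (Fin d)} {A : Finset (Fin d)}
    (hA : IsAntichain P.le (A : Set (Fin d))) :
    (fun i => if i ∈ A then (1 : ℝ) else 0) ∈ chainPolytope P.le := by
  classical
  constructor
  · intro i
    dsimp only
    split <;> norm_num
  · intro c hc
    have hrw : ∑ i ∈ c, (if i ∈ A then (1 : ℝ) else 0) = ∑ i ∈ c ∩ A, (1 : ℝ) :=
      Finset.sum_ite_mem c A (fun _ => (1 : ℝ))
    rw [hrw, Finset.sum_const, nsmul_eq_mul, mul_one]
    have hle : (c ∩ A).card ≤ 1 := by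
      rw [Finset.card_le_one]
      intro a ha b hb
      simp only [Finset.mem_inter] at ha hb
      by_contra hne
      rcases hc.1 (Finset.mem_coe.2 ha.1) (Finset.mem_coe.2 hb.1) hne with h | h
      · exact hA (Finset.mem_coe.2 ha.2) (Finset.mem_coe.2 hb.2) hne h
      · exact hA (Finset.mem_coe.2 hb.2) (Finset.mem_coe.2 ha.2) (Ne.symm hne) h
    exact_mod_cast hle

lemma chainPolytope_convex {d : ℕ} (P : PartialOrder (Fin d)) :
    Convex ℝ (chainPolytope P.le) := by
  intro y hy z hz a b ha hb hab
  constructor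
  · intro i
    have h1 := hy.1 i
    have h2 := hz.1 i
    simp only [Pi.add_apply, Pi.smul_apply, smul_eq_mul]
    nlinarith
  · intro c hc
    have h1 := hy.2 c hc
    have h2 := hz.2 c hc
    have hrw : ∑ i ∈ c, (a • y + b • z) i = a * ∑ i ∈ c, y i + b * ∑ i ∈ c, z i := by
      simp only [Pi.add_apply, Pi.smul_apply, smul_eq_mul, Finset.sum_add_distrib,
        Finset.mul_sum]
    rw [hrw]
    nlinarith

/- ### The level function -/

open scoped Classical in
noncomputable def cands {d : ℕ} (P : PartialOrder (Fin d)) (i : Fin d) :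
    Finset (Finset (Fin d)) :=
  Finset.univ.filter (fun c => i ∈ c ∧ IsChain P.le (c : Set (Fin d)) ∧ ∀ j ∈ c, P.le j i)

lemma singleton_mem_cands {d : ℕ} (P : PartialOrder (Fin d)) (i : Fin d) :
    {i} ∈ cands P i := by
  classical
  simp only [cands, Finset.mem_filter, Finset.mem_univ, true_and]
  refine ⟨Finset.mem_singleton_self i, ?_, ?_⟩
  · rw [Finset.coe_singleton]
    exact Set.subsingleton_singleton.isChain
  · intro j hj
    rw [Finset.mem_singleton] at hj
    rw [hj]

noncomputable def hfun {d : ℕ} (P : PartialOrder (Fin d)) (x : Fin d → ℝ) (i : Fin d) : ℝ :=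
  (cands P i).sup' ⟨{i}, singleton_mem_cands P i⟩ (fun c => ∑ j ∈ c, x j)

lemma x_le_hfun {d : ℕ} (P : PartialOrder (Fin d)) (x : Fin d → ℝ) (i : Fin d) :
    x i ≤ hfun P x i := by
  have h := Finset.le_sup' (f := fun c : Finset (Fin d) => ∑ j ∈ c, x j)
    (singleton_mem_cands P i)
  simp only [Finset.sum_singleton] at h
  exact h

lemma hfun_le_one {d : ℕ} {P : PartialOrder (Fin d)} {x : Fin d → ℝ}
    (hx : x ∈ chainPolytope P.le) (i : Fin d) : hfun P x i ≤ 1 := by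
  apply Finset.sup'_le
  intro c hcand
  simp only [cands, Finset.mem_filter, Finset.mem_univ, true_and] at hcand
  obtain ⟨-, hch, -⟩ := hcand
  obtain ⟨M, hM, hsub⟩ := hch.exists_maxChain
  have hfin : M.Finite := Set.toFinite M
  have h1 := hx.2 hfin.toFinset (by rwa [Set.Finite.coe_toFinset])
  have h2 : ∑ j ∈ c, x j ≤ ∑ j ∈ hfin.toFinset, x j := by
    apply Finset.sum_le_sum_of_subset_of_nonneg
    · intro j hj
      rw [Set.Finite.mem_toFinset]
      exact hsub (Finset.mem_coe.2 hj)
    · intro j _ _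
      exact hx.1 j
  linarith

lemma hfun_add {d : ℕ} (P : PartialOrder (Fin d)) (x : Fin d → ℝ) {i j : Fin d}
    (hij : P.le i j) (hne : i ≠ j) : hfun P x i + x j ≤ hfun P x j := by
  classical
  have key : hfun P x i ≤ hfun P x j - x j := by
    apply Finset.sup'_le
    intro c hcand
    simp only [cands, Finset.mem_filter, Finset.mem_univ, true_and] at hcand
    obtain ⟨hic, hch, hbd⟩ := hcand
    have hjc : j ∉ c := fun hjc => hne (P.le_antisymm i j hij (hbd j hjc))
    have hmem : insert j c ∈ cands P j := by
      simp only [cands, Finset.mem_filter, Finset.mem_univ, true_and]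
      refine ⟨Finset.mem_insert_self j c, ?_, ?_⟩
      · rw [Finset.coe_insert]
        apply hch.insert
        intro b hb _
        exact Or.inr (P.le_trans _ _ _ (hbd b (Finset.mem_coe.1 hb)) hij)
      · intro k hk
        rcases Finset.mem_insert.1 hk with rfl | hk
        · exact P.le_refl k
        · exact P.le_trans _ _ _ (hbd k hk) hij
    have hle := Finset.le_sup' (f := fun c : Finset (Fin d) => ∑ m ∈ c, x m) hmem
    simp only [Finset.sum_insert hjc] at hle
    have hle' : x j + ∑ m ∈ c, x m ≤ hfun P x j := hle
    linarith
  linarith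

/- ### Decomposition into antichain indicators -/

lemma mem_convexHull_of_mem {d : ℕ} (P : PartialOrder (Fin d)) {x : Fin d → ℝ}
    (hx : x ∈ chainPolytope P.le) :
    x ∈ convexHull ℝ {y : Fin d → ℝ | ∃ A : Finset (Fin d),
      IsAntichain P.le (A : Set (Fin d)) ∧ y = fun i => if i ∈ A then (1 : ℝ) else 0} := by
  classical
  have hgx : ∀ i, 0 ≤ hfun P x i - x i := fun i => by
    have := x_le_hfun P x i
    linarith
  have hgx0 : ∀ i, 0 ≤ hfun P x i := fun i => le_trans (hx.1 i) (x_le_hfun P x i)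
  have hg1 : ∀ i, hfun P x i ≤ 1 := fun i => hfun_le_one hx i
  obtain ⟨B, hB⟩ : ∃ B : Finset ℝ, B = insert 0 (insert 1
      ((Finset.univ.image (hfun P x)) ∪ (Finset.univ.image (fun i => hfun P x i - x i)))) :=
    ⟨_, rfl⟩
  have h0B : (0 : ℝ) ∈ B := by rw [hB]; simp
  have h1B : (1 : ℝ) ∈ B := by rw [hB]; simp
  have hgB : ∀ i, hfun P x i ∈ B := fun i => by
    rw [hB]
    simp only [Finset.mem_insert, Finset.mem_union, Finset.mem_image]
    exact Or.inr (Or.inr (Or.inl ⟨i, Finset.mem_univ i, rfl⟩))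
  have hgxB : ∀ i, hfun P x i - x i ∈ B := fun i => by
    rw [hB]
    simp only [Finset.mem_insert, Finset.mem_union, Finset.mem_image]
    exact Or.inr (Or.inr (Or.inr ⟨i, Finset.mem_univ i, rfl⟩))
  obtain ⟨F, hF⟩ : ∃ F : Finset ℝ, F = B.filter (fun b => 0 < b ∧ b ≤ 1) := ⟨_, rfl⟩
  obtain ⟨A, hAmem⟩ : ∃ A : ℝ → Finset (Fin d), ∀ b i,
      i ∈ A b ↔ (hfun P x i - x i < b ∧ b ≤ hfun P x i) :=
    ⟨fun b => Finset.univ.filter (fun i => hfun P x i - x i < b ∧ b ≤ hfun P x i),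
      fun b i => by simp⟩
  have hw0 : ∀ b ∈ F, 0 ≤ b - prevS B b := by
    intro b hb
    rw [hF, Finset.mem_filter] at hb
    have := (prevS_spec h0B hb.2.1).2.1
    linarith
  have hwsum : ∑ b ∈ F, (b - prevS B b) = 1 := by
    rw [hF]
    have := telescope B _ 0 1 h0B h1B (by norm_num) rfl
    linarith
  have hanti : ∀ b, IsAntichain P.le ((A b : Finset (Fin d)) : Set (Fin d)) := by
    intro b a ha c hc hne hle
    rw [Finset.mem_coe, hAmem] at ha hc
    have h1 := hfun_add P x hle hne
    linarith [ha.2, hc.1]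
  have hzV : ∀ b ∈ F, (fun i => if i ∈ A b then (1 : ℝ) else 0) ∈
      {y : Fin d → ℝ | ∃ A : Finset (Fin d),
        IsAntichain P.le (A : Set (Fin d)) ∧ y = fun i => if i ∈ A then (1 : ℝ) else 0} :=
    fun b _ => ⟨A b, hanti b, rfl⟩
  have hxsum : ∀ i, ∑ b ∈ F, (b - prevS B b) * (if i ∈ A b then (1 : ℝ) else 0) = x i := by
    intro i
    have e1 : ∀ b ∈ F, (b - prevS B b) * (if i ∈ A b then (1 : ℝ) else 0)
        = if hfun P x i - x i < b ∧ b ≤ hfun P x i then (b - prevS B b) else 0 := by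
      intro b _
      by_cases hmem : i ∈ A b
      · rw [if_pos hmem, if_pos ((hAmem b i).1 hmem), mul_one]
      · rw [if_neg hmem, if_neg (fun hc => hmem ((hAmem b i).2 hc)), mul_zero]
    rw [Finset.sum_congr rfl e1, hF,
      sum_slice B (hfun P x i - x i) (hfun P x i) (hgxB i) (hgB i)
        (by linarith [hx.1 i]) (hgx i) (hg1 i)]
    ring
  have hws : (0 : ℝ) < ∑ b ∈ F, (b - prevS B b) := by rw [hwsum]; norm_num
  have hcm := Finset.centerMass_mem_convexHull F hw0 hws hzV
  have hxeq : x = F.centerMass (fun b => b - prevS B b)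
      (fun b => fun i => if i ∈ A b then (1 : ℝ) else 0) := by
    rw [Finset.centerMass_eq_of_sum_1 _ _ hwsum]
    funext i
    rw [Finset.sum_apply]
    simp only [Pi.smul_apply, smul_eq_mul]
    exact (hxsum i).symm
  rwa [← hxeq] at hcm

/- ### The main theorem -/

/-- The vertices (extreme points) of the chain polytope `C_P` are exactly the
indicator vectors `ρ(A)` of antichains `A` of `P`. -/
theorem vertices_chainPolytope (d : ℕ) (P : PartialOrder (Fin d)) :
    Set.extremePoints ℝ (chainPolytope P.le) =
      {x | ∃ A : Finset (Fin d), IsAntichain P.le (A : Set (Fin d)) ∧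
        x = fun i => if i ∈ A then (1 : ℝ) else 0} := by
  classical
  ext x
  constructor
  · intro hx
    have hsub : convexHull ℝ {y : Fin d → ℝ | ∃ A : Finset (Fin d),
        IsAntichain P.le (A : Set (Fin d)) ∧ y = fun i => if i ∈ A then (1 : ℝ) else 0}
        ⊆ chainPolytope P.le := by
      apply convexHull_min _ (chainPolytope_convex P)
      rintro y ⟨A, hA, rfl⟩
      exact indicator_mem hA
    rw [mem_extremePoints] at hx
    have hx' : x ∈ Set.extremePoints ℝ (convexHull ℝ {y : Fin d → ℝ | ∃ A : Finset (Fin d),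
        IsAntichain P.le (A : Set (Fin d)) ∧ y = fun i => if i ∈ A then (1 : ℝ) else 0}) := by
      rw [mem_extremePoints]
      exact ⟨mem_convexHull_of_mem P hx.1,
        fun y hy z hz hseg => hx.2 y (hsub hy) z (hsub hz) hseg⟩
    exact extremePoints_convexHull_subset hx'
  · rintro ⟨A, hA, rfl⟩
    rw [mem_extremePoints]
    refine ⟨indicator_mem hA, ?_⟩
    intro y hy z hz hseg
    obtain ⟨a, b, ha, hb, hab, hsum⟩ := hseg
    have key : ∀ i, y i = (if i ∈ A then (1 : ℝ) else 0)
        ∧ z i = (if i ∈ A then (1 : ℝ) else 0) := by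
      intro i
      have hsi : a * y i + b * z i = (if i ∈ A then (1 : ℝ) else 0) := by
        have h := congrFun hsum i
        simpa [Pi.add_apply, Pi.smul_apply, smul_eq_mul] using h
      have hy0 := hy.1 i
      have hz0 := hz.1 i
      have hy1 := le_one_of_mem hy i
      have hz1 := le_one_of_mem hz i
      by_cases hiA : i ∈ A
      · simp only [if_pos hiA] at hsi ⊢
        constructor <;>
          nlinarith [mul_nonneg ha.le (sub_nonneg.2 hy1), mul_nonneg hb.le (sub_nonneg.2 hz1)]
      · simp only [if_neg hiA] at hsi ⊢
        constructor <;>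
          nlinarith [mul_nonneg ha.le hy0, mul_nonneg hb.le hz0]
    exact ⟨funext fun i => (key i).1, funext fun i => (key i).2⟩
end

section
/- If P and Q are finite posets on d elements possessing a common linear extension, then the origin of ℝ^{d+1} lies in the interior of Ω(O_P, O_Q) = conv((O_P × {1}) ∪ (−O_Q × {−1})). -/
/-! The point `x` with `x (σ a) = (d - a) / (d + 1)` lies in `(0, 1)^d` and strictly decreases
along the common linear extension, so it strictly reverses both orders. Such points form an open
subset of each order polytope; hence `x` is interior to `O_P` and lies in `O_Q`. Then `0` is the
midpoint of `(x, 1)` and `(-x, -1)`, and perturbing both the top point inside `O_P × {1}` and the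
weight of the segment covers a neighbourhood of `0`. -/

def orderPolytope {d : ℕ} (r : Fin d → Fin d → Prop) : Set (Fin d → ℝ) :=
  {x | (∀ i, 0 ≤ x i ∧ x i ≤ 1) ∧ ∀ i j, r i j → x j ≤ x i}

def OmegaPoly {d : ℕ} (A B : Set (Fin d → ℝ)) : Set (Fin (d + 1) → ℝ) :=
  convexHull ℝ
    (((fun x => Fin.snoc x (1 : ℝ)) '' A) ∪ ((fun x => Fin.snoc (-x) (-1 : ℝ)) '' B))

section OmegaPoly

variable {d : ℕ}

lemma smul_snoc_add_smul_snoc (c c' s s' : ℝ) (a a' : Fin d → ℝ) :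
    c • (Fin.snoc a s : Fin (d + 1) → ℝ) + c' • Fin.snoc a' s' =
      Fin.snoc (c • a + c' • a') (c * s + c' * s') := by
  ext i
  refine Fin.lastCases ?_ (fun k => ?_) i <;> simp

theorem zero_mem_interior_OmegaPoly {A B : Set (Fin d → ℝ)} {x : Fin d → ℝ}
    (hA : x ∈ interior A) (hB : x ∈ B) :
    (0 : Fin (d + 1) → ℝ) ∈ interior (OmegaPoly A B) := by
  -- Near `0`, `y` lies on the segment from `snoc (-x) (-1)` to `snoc (f y) 1`, with weight
  -- `t y` on the latter, and `f y` stays close to `f 0 = x`.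
  set t : (Fin (d + 1) → ℝ) → ℝ := fun y => (1 + y (Fin.last d)) / 2
  set f : (Fin (d + 1) → ℝ) → Fin d → ℝ := fun y => (t y)⁻¹ • (Fin.init y + (1 - t y) • x)
  have hf0 : f 0 = x := by
    ext i; simp [f, t, Fin.init]; ring
  have hf : ContinuousAt f 0 :=
    (ContinuousAt.inv₀ (f := t) (by fun_prop) (by norm_num [t])).smul (by fun_prop)
  rw [mem_interior_iff_mem_nhds]
  filter_upwards [hf.preimage_mem_nhds (isOpen_interior.mem_nhds (hf0 ▸ hA)),
    (isOpen_lt (continuous_apply (Fin.last d)).abs continuous_const).mem_nhds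
      (show |(0 : Fin (d + 1) → ℝ) (Fin.last d)| < 1 by simp)] with y hyA hy_last
  obtain ⟨hy₁, hy₂⟩ := abs_lt.mp hy_last
  have ht₀ : 0 < t y := by simp only [t]; linarith
  have ht₁ : t y < 1 := by simp only [t]; linarith
  have hy :
      y = t y • (Fin.snoc (f y) 1 : Fin (d + 1) → ℝ) + (1 - t y) • Fin.snoc (-x) (-1) := by
    conv_lhs => rw [← Fin.snoc_init_self y]
    rw [smul_snoc_add_smul_snoc]
    congr 1
    · simp only [f, smul_smul, mul_inv_cancel₀ ht₀.ne', one_smul, smul_neg,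
        add_neg_cancel_right]
    · simp only [t]; ring
  rw [hy, OmegaPoly]
  refine convex_convexHull ℝ _ (subset_convexHull ℝ _ ?_) (subset_convexHull ℝ _ ?_)
    ht₀.le (sub_nonneg.2 ht₁.le) (add_sub_cancel _ _)
  exacts [.inl ⟨_, interior_subset hyA, rfl⟩, .inr ⟨x, hB, rfl⟩]

end OmegaPoly

section OrderPolytope

variable {d : ℕ}

def strictOrderPolytope (r : Fin d → Fin d → Prop) : Set (Fin d → ℝ) :=
  {x | (∀ i, 0 < x i ∧ x i < 1) ∧ ∀ i j, r i j → x j < x i}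

lemma isOpen_strictOrderPolytope (r : Fin d → Fin d → Prop) :
    IsOpen (strictOrderPolytope r) := by
  simp only [strictOrderPolytope, Set.ofPred_and, Set.ofPred_forall]
  refine .inter (isOpen_iInter_of_finite fun i => .inter ?_ ?_) (isOpen_iInter_of_finite fun i =>
    isOpen_iInter_of_finite fun j => isOpen_iInter_of_finite fun _ => ?_)
  all_goals exact isOpen_lt (by fun_prop) (by fun_prop)

lemma strictOrderPolytope_subset_interior_orderPolytope (P : PartialOrder (Fin d)) :
    strictOrderPolytope P.lt ⊆ interior (orderPolytope P.le) := by
  refine interior_maximal (fun x ⟨hx, hlt⟩ =>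
    ⟨fun i => ⟨(hx i).1.le, (hx i).2.le⟩, fun i j hij => ?_⟩) (isOpen_strictOrderPolytope _)
  rcases (@le_iff_lt_or_eq _ P i j).mp hij with h | rfl
  · exact (hlt i j h).le
  · exact le_rfl

noncomputable def linearExtensionPoint (σ : Equiv.Perm (Fin d)) : Fin d → ℝ :=
  fun i => ((d : ℝ) - σ.symm i) / (d + 1)

lemma linearExtensionPoint_mem_strictOrderPolytope {r : Fin d → Fin d → Prop}
    {σ : Equiv.Perm (Fin d)} (h : ∀ a b, r (σ a) (σ b) → a < b) :
    linearExtensionPoint σ ∈ strictOrderPolytope r := by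
  have hd : (0 : ℝ) < d + 1 := by positivity
  refine ⟨fun i => ⟨div_pos ?_ hd, (div_lt_one hd).mpr ?_⟩, fun i j hij => ?_⟩
  · have : ((σ.symm i : ℕ) : ℝ) < d := by exact_mod_cast (σ.symm i).isLt
    linarith
  · have : (0 : ℝ) ≤ (σ.symm i : ℕ) := by positivity
    linarith
  · have : ((σ.symm i : ℕ) : ℝ) < (σ.symm j : ℕ) := by
      exact_mod_cast h _ _ (by simpa using hij)
    exact div_lt_div_of_pos_right (by linarith) hd

end OrderPolytope

/-- If the posets `P` and `Q` on `d` elements possess a common linear extension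
(a permutation `σ` of `[d]` listing the elements compatibly with both orders),
then the origin of `ℝ^{d+1}` lies in the interior of `Ω(O_P, O_Q)`. -/
theorem zero_mem_interior_Omega_order_order (d : ℕ) (P Q : PartialOrder (Fin d))
    (σ : Equiv.Perm (Fin d))
    (hP : ∀ a b : Fin d, P.lt (σ a) (σ b) → a < b)
    (hQ : ∀ a b : Fin d, Q.lt (σ a) (σ b) → a < b) :
    (0 : Fin (d + 1) → ℝ) ∈
      interior (OmegaPoly (orderPolytope P.le) (orderPolytope Q.le)) :=
  zero_mem_interior_OmegaPoly
    (strictOrderPolytope_subset_interior_orderPolytope P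
      (linearExtensionPoint_mem_strictOrderPolytope hP))
    (interior_subset (strictOrderPolytope_subset_interior_orderPolytope Q
      (linearExtensionPoint_mem_strictOrderPolytope hQ)))
end

section
/- For any finite posets P and Q on d elements, the origin of ℝ^{d+1} is the unique interior lattice point of Ω(C_P, C_Q) = conv((C_P × {1}) ∪ (−C_Q × {−1})). -/
/-- every coordinate of a chain-polytope point is at most 1 -/
lemma chainPolytope_coord_le_one {d : ℕ} {r : Fin d → Fin d → Prop}
    {a : Fin d → ℝ} (ha : a ∈ chainPolytope r) (i : Fin d) : a i ≤ 1 := by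
  obtain ⟨t, ht, hst⟩ := (Set.subsingleton_singleton (a := i)).isChain (r := r).exists_maxChain
  have hfin : t.Finite := Set.toFinite t
  have hcoe : (hfin.toFinset : Set (Fin d)) = t := hfin.coe_toFinset
  have hsum := ha.2 hfin.toFinset (by rw [hcoe]; exact ht)
  have hi : i ∈ hfin.toFinset := hfin.mem_toFinset.2 (hst rfl)
  calc a i ≤ ∑ j ∈ hfin.toFinset, a j :=
        Finset.single_le_sum (fun j _ => ha.1 j) hi
    _ ≤ 1 := hsum

lemma omegaPoly_subset {d : ℕ} {rP rQ : Fin d → Fin d → Prop} :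
    OmegaPoly (chainPolytope rP) (chainPolytope rQ) ⊆
      Set.pi Set.univ (fun _ : Fin (d+1) => Set.Icc (-1:ℝ) 1) := by
  apply convexHull_min _ (convex_pi fun i _ => convex_Icc _ _)
  rintro p (⟨a, ha, rfl⟩ | ⟨b, hb, rfl⟩) <;> intro i _
  · refine Fin.lastCases ?_ ?_ i
    · simp
    · intro j
      simp only [Fin.snoc_castSucc]
      exact ⟨le_trans (by norm_num) (ha.1 j), chainPolytope_coord_le_one ha j⟩
  · refine Fin.lastCases ?_ ?_ i
    · simp
    · intro j
      simp only [Fin.snoc_castSucc, Pi.neg_apply]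
      constructor
      · linarith [chainPolytope_coord_le_one hb j]
      · linarith [hb.1 j]

/-- the key open neighborhood of 0 contained in OmegaPoly -/
lemma nbhd_subset_omegaPoly {d : ℕ} {rP rQ : Fin d → Fin d → Prop} :
    {x : Fin (d+1) → ℝ | 2 * ∑ i : Fin d, |x (Fin.castSucc i)| + |x (Fin.last d)| < 1}
      ⊆ OmegaPoly (chainPolytope rP) (chainPolytope rQ) := by
  intro x hx
  simp only [Set.mem_setOf_eq] at hx
  set t := x (Fin.last d) with ht_def
  set S := ∑ i : Fin d, |x (Fin.castSucc i)| with hS_def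
  have hS0 : 0 ≤ S := Finset.sum_nonneg fun i _ => abs_nonneg _
  have habs : |t| < 1 := by nlinarith
  set θ : ℝ := (1 + t) / 2 with hθ_def
  have hθ0 : 0 < θ := by have := abs_lt.1 habs; simp only [hθ_def]; linarith [this.1]
  have hθ1 : θ < 1 := by have := abs_lt.1 habs; simp only [hθ_def]; linarith [this.2]
  have hSθ : S < θ := by
    have h1 : -t ≤ |t| := neg_le_abs t
    simp only [hθ_def]; linarith
  have hSθ' : S < 1 - θ := by
    have h1 : t ≤ |t| := le_abs_self t
    simp only [hθ_def]; linarith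
  set a : Fin d → ℝ := fun i => max (x (Fin.castSucc i)) 0 / θ with ha_def
  set b : Fin d → ℝ := fun i => max (-(x (Fin.castSucc i))) 0 / (1 - θ) with hb_def
  have hmaxS : ∀ (f : Fin d → ℝ), (∀ i, max (f i) 0 ≤ |x (Fin.castSucc i)|) →
      ∑ i : Fin d, max (f i) 0 ≤ S := fun f hf => Finset.sum_le_sum fun i _ => hf i
  have ha : a ∈ chainPolytope rP := by
    constructor
    · intro i; exact div_nonneg (le_max_right _ _) hθ0.le
    · intro c hc
      have h1 : ∑ i ∈ c, a i ≤ ∑ i : Fin d, a i :=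
        Finset.sum_le_sum_of_subset_of_nonneg (Finset.subset_univ c)
          (fun i _ _ => div_nonneg (le_max_right _ _) hθ0.le)
      have h2 : ∑ i : Fin d, a i = (∑ i : Fin d, max (x (Fin.castSucc i)) 0) / θ := by
        simp [ha_def, Finset.sum_div]
      have h3 : ∑ i : Fin d, max (x (Fin.castSucc i)) 0 ≤ S :=
        hmaxS _ fun i => max_le (le_abs_self _) (abs_nonneg _)
      rw [h2] at h1
      calc ∑ i ∈ c, a i ≤ (∑ i : Fin d, max (x (Fin.castSucc i)) 0) / θ := h1
        _ ≤ 1 := by rw [div_le_one hθ0]; linarith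
  have hb : b ∈ chainPolytope rQ := by
    have h1θ : (0:ℝ) < 1 - θ := by linarith
    constructor
    · intro i; exact div_nonneg (le_max_right _ _) h1θ.le
    · intro c hc
      have h1 : ∑ i ∈ c, b i ≤ ∑ i : Fin d, b i :=
        Finset.sum_le_sum_of_subset_of_nonneg (Finset.subset_univ c)
          (fun i _ _ => div_nonneg (le_max_right _ _) h1θ.le)
      have h2 : ∑ i : Fin d, b i = (∑ i : Fin d, max (-(x (Fin.castSucc i))) 0) / (1 - θ) := by
        simp [hb_def, Finset.sum_div]
      have h3 : ∑ i : Fin d, max (-(x (Fin.castSucc i))) 0 ≤ S :=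
        hmaxS _ fun i => max_le (neg_le_abs _) (abs_nonneg _)
      rw [h2] at h1
      calc ∑ i ∈ c, b i ≤ (∑ i : Fin d, max (-(x (Fin.castSucc i))) 0) / (1 - θ) := h1
        _ ≤ 1 := by rw [div_le_one h1θ]; linarith
  have hp : (Fin.snoc a 1 : Fin (d+1) → ℝ) ∈
      ((fun y => Fin.snoc y (1 : ℝ)) '' chainPolytope rP) := ⟨a, ha, rfl⟩
  have hq : (Fin.snoc (-b) (-1) : Fin (d+1) → ℝ) ∈
      ((fun y => Fin.snoc (-y) (-1 : ℝ)) '' chainPolytope rQ) := ⟨b, hb, rfl⟩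
  have hseg : x ∈ segment ℝ (Fin.snoc a 1 : Fin (d+1) → ℝ) (Fin.snoc (-b) (-1)) := by
    refine ⟨θ, 1 - θ, hθ0.le, by linarith, by ring, ?_⟩
    funext i
    refine Fin.lastCases ?_ ?_ i
    · simp only [Pi.add_apply, Pi.smul_apply, Fin.snoc_last, smul_eq_mul]
      rw [← ht_def]; ring
    · intro j
      simp only [Pi.add_apply, Pi.smul_apply, Fin.snoc_castSucc, Pi.neg_apply, smul_eq_mul,
        ha_def, hb_def]
      rw [mul_div_cancel₀ _ hθ0.ne', mul_neg, mul_div_cancel₀ _ (by linarith : (1:ℝ) - θ ≠ 0)]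
      rw [← sub_eq_add_neg]
      exact max_zero_sub_eq_self _
  exact segment_subset_convexHull (Set.mem_union_left _ hp) (Set.mem_union_right _ hq) hseg

/-- For any finite posets `P` and `Q` on `d` elements, the origin is the unique
interior lattice point of `Ω(C_P, C_Q)`. -/
theorem unique_interior_lattice_point_Omega_chain_chain (d : ℕ)
    (P Q : PartialOrder (Fin d)) :
    interior (OmegaPoly (chainPolytope P.le) (chainPolytope Q.le)) ∩
        {x : Fin (d + 1) → ℝ | ∀ i, ∃ z : ℤ, x i = z} = {0} := by
  apply Set.eq_singleton_iff_unique_mem.2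
  constructor
  · constructor
    · -- 0 ∈ interior
      have hopen : IsOpen {x : Fin (d+1) → ℝ |
          2 * ∑ i : Fin d, |x (Fin.castSucc i)| + |x (Fin.last d)| < 1} := by
        have hc : Continuous fun x : Fin (d+1) → ℝ =>
            2 * ∑ i : Fin d, |x (Fin.castSucc i)| + |x (Fin.last d)| := by
          apply Continuous.add
          · exact (continuous_const.mul (continuous_finset_sum _ fun i _ =>
              (continuous_apply _).abs))
          · exact (continuous_apply _).abs
        exact isOpen_lt hc continuous_const
      have h0 : (0 : Fin (d+1) → ℝ) ∈ {x : Fin (d+1) → ℝ |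
          2 * ∑ i : Fin d, |x (Fin.castSucc i)| + |x (Fin.last d)| < 1} := by
        simp
      exact interior_maximal nbhd_subset_omegaPoly hopen h0
    · intro i; exact ⟨0, by simp⟩
  · rintro x ⟨hx, hz⟩
    have hcube : x ∈ interior (Set.pi Set.univ (fun _ : Fin (d+1) => Set.Icc (-1:ℝ) 1)) :=
      interior_mono omegaPoly_subset hx
    rw [interior_pi_set Set.finite_univ] at hcube
    funext i
    obtain ⟨z, hzi⟩ := hz i
    have := hcube i (Set.mem_univ i)
    simp only [Function.comp, interior_Icc, hzi] at this
    have h1 : (-1 : ℝ) < z := this.1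
    have h2 : (z : ℝ) < 1 := this.2
    have h1' : (-1 : ℤ) < z := by exact_mod_cast h1
    have h2' : z < 1 := by exact_mod_cast h2
    have hz0 : z = 0 := by omega
    simp [hzi, hz0]
end

section
/- For any finite posets P and Q on d elements, Ω(C_P, C_Q) is a Gorenstein Fano (reflexive) polytope, i.e., its dual polytope {x : ⟨x,y⟩ ≤ 1 for all y ∈ Ω(C_P,C_Q)} is an integral polytope. -/
/-- The dual (polar) polytope `{x : ⟨x,y⟩ ≤ 1 for all y ∈ S}`. -/
def dualPoly {n : ℕ} (S : Set (Fin n → ℝ)) : Set (Fin n → ℝ) :=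
  {x | ∀ y ∈ S, ∑ i, x i * y i ≤ 1}

def IsLatticePoint {n : ℕ} (x : Fin n → ℝ) : Prop := ∀ i, ∃ z : ℤ, x i = z
open Finset
noncomputable section
open scoped Classical

variable {d : ℕ}

def AC (po : PartialOrder (Fin d)) (A : Finset (Fin d)) : Prop :=
  ∀ a ∈ A, ∀ b ∈ A, po.le a b → a = b

def CH (po : PartialOrder (Fin d)) (C : Finset (Fin d)) : Prop :=
  ∀ a ∈ C, ∀ b ∈ C, po.le a b ∨ po.le b a

def ind (C : Finset (Fin d)) : Fin d → ℝ := fun i => if i ∈ C then 1 else 0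

example (po : PartialOrder (Fin d)) (a b c : Fin d) (h1 : po.le a b) (h2 : po.le b c) : po.le a c :=
  po.le_trans a b c h1 h2

example (po : PartialOrder (Fin d)) (a b : Fin d) (h1 : po.le a b) (h2 : po.le b a) : a = b :=
  po.le_antisymm a b h1 h2

example (po : PartialOrder (Fin d)) (a : Fin d) : po.le a a := po.le_refl a

lemma exists_max_above (po : PartialOrder (Fin d)) (D : Finset (Fin d)) {z} (hz : z ∈ D) :
    ∃ m ∈ D, po.le z m ∧ ∀ y ∈ D, po.le m y → y = m := by
  classical
  set U := D.filter (fun y => po.le z y) with hU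
  have hne : U.Nonempty := ⟨z, by simp [hU, po.le_refl, hz]⟩
  obtain ⟨m, hmU, hmin⟩ :=
    Finset.exists_min_image U (fun m => (D.filter (fun y => po.le m y)).card) hne
  simp only [hU, mem_filter] at hmU
  refine ⟨m, hmU.1, hmU.2, ?_⟩
  intro y hy hle
  by_contra hne'
  have hyU : y ∈ U := by
    simp only [hU, mem_filter]
    exact ⟨hy, po.le_trans _ _ _ hmU.2 hle⟩
  have hsub : D.filter (fun w => po.le y w) ⊂ D.filter (fun w => po.le m w) := by
    constructor
    · intro a ha; simp only [mem_filter] at ha ⊢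
      exact ⟨ha.1, po.le_trans _ _ _ hle ha.2⟩
    · intro hcon
      have hm : m ∈ D.filter (fun w => po.le y w) :=
        hcon (by simp only [mem_filter]; exact ⟨hmU.1, po.le_refl m⟩)
      simp only [mem_filter] at hm
      exact hne' (po.le_antisymm _ _ hm.2 hle)
  exact absurd (hmin y hyU) (not_le.2 (Finset.card_lt_card hsub))

def dw (po : PartialOrder (Fin d)) (S A : Finset (Fin d)) : Finset (Fin d) :=
  S.filter (fun z => ∃ a ∈ A, po.le z a)

def pmeet (po : PartialOrder (Fin d)) (S A B : Finset (Fin d)) : Finset (Fin d) :=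
  (dw po S A ∩ dw po S B).filter
    (fun a => ∀ b ∈ dw po S A ∩ dw po S B, po.le a b → b = a)

def jn (po : PartialOrder (Fin d)) (A B : Finset (Fin d)) : Finset (Fin d) :=
  (A ∪ B).filter (fun a => ∀ b ∈ A ∪ B, po.le a b → b = a)

variable {po : PartialOrder (Fin d)}

lemma AC_subset {A B : Finset (Fin d)} (h : AC po A) (hBA : B ⊆ A) : AC po B :=
  fun a ha b hb hle => h a (hBA ha) b (hBA hb) hle

lemma jn_subset {A B : Finset (Fin d)} : jn po A B ⊆ A ∪ B := filter_subset _ _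

lemma AC_jn {A B : Finset (Fin d)} : AC po (jn po A B) := by
  intro a ha b hb hle
  simp only [jn, mem_filter] at ha hb
  exact (ha.2 b hb.1 hle).symm

lemma AC_pmeet {S A B : Finset (Fin d)} : AC po (pmeet po S A B) := by
  intro a ha b hb hle
  simp only [pmeet, mem_filter] at ha hb
  exact (ha.2 b hb.1 hle).symm

lemma pmeet_subset_inter {S A B : Finset (Fin d)} : pmeet po S A B ⊆ dw po S A ∩ dw po S B :=
  filter_subset _ _

lemma dw_subset {S A : Finset (Fin d)} : dw po S A ⊆ S := filter_subset _ _

lemma mem_dw {S A : Finset (Fin d)} {z : Fin d} :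
    z ∈ dw po S A ↔ z ∈ S ∧ ∃ a ∈ A, po.le z a := by simp [dw]

lemma self_subset_dw {S A : Finset (Fin d)} (hAS : A ⊆ S) : A ⊆ dw po S A := by
  intro a ha
  exact mem_dw.2 ⟨hAS ha, a, ha, po.le_refl a⟩

lemma inter_subset_jn {A B : Finset (Fin d)} (hA : AC po A) (hB : AC po B) :
    A ∩ B ⊆ jn po A B := by
  intro x hx
  simp only [mem_inter] at hx
  simp only [jn, mem_filter, mem_union]
  refine ⟨Or.inl hx.1, ?_⟩
  rintro b (hb | hb) hle
  · exact (hA x hx.1 b hb hle).symm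
  · exact (hB x hx.2 b hb hle).symm

lemma inter_subset_pmeet {S A B : Finset (Fin d)} (hAS : A ⊆ S) (hBS : B ⊆ S)
    (hA : AC po A) (hB : AC po B) : A ∩ B ⊆ pmeet po S A B := by
  intro x hx
  simp only [mem_inter] at hx
  have hxD : x ∈ dw po S A ∩ dw po S B :=
    mem_inter.2 ⟨self_subset_dw hAS hx.1, self_subset_dw hBS hx.2⟩
  simp only [pmeet, mem_filter]
  refine ⟨hxD, ?_⟩
  intro b hb hle
  obtain ⟨a, haA, hba⟩ := (mem_dw.1 (mem_inter.1 hb).1).2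
  have hxa : x = a := hA x hx.1 a haA (po.le_trans _ _ _ hle hba)
  exact po.le_antisymm _ _ (hxa ▸ hba) hle

lemma sdiff_subset_pmeet {S A B : Finset (Fin d)} (hAS : A ⊆ S) (hBS : B ⊆ S)
    (hA : AC po A) (hB : AC po B) : (A ∪ B) \ jn po A B ⊆ pmeet po S A B := by
  intro x hx
  simp only [mem_sdiff, jn, mem_filter, not_and] at hx
  obtain ⟨hxAB, hxnj⟩ := hx
  push_neg at hxnj
  obtain ⟨y, hyAB, hley, hyne⟩ := hxnj hxAB
  -- x is in dw S A ∩ dw S B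
  have hxD : x ∈ dw po S A ∩ dw po S B := by
    rcases mem_union.1 hxAB with hxA | hxB
    · have hyB : y ∈ B := by
        rcases mem_union.1 hyAB with hyA | hyB
        · exact absurd (hA x hxA y hyA hley) (fun h => hyne h.symm)
        · exact hyB
      exact mem_inter.2 ⟨self_subset_dw hAS hxA,
        mem_dw.2 ⟨hAS hxA, y, hyB, hley⟩⟩
    · have hyA : y ∈ A := by
        rcases mem_union.1 hyAB with hyA | hyB
        · exact hyA
        · exact absurd (hB x hxB y hyB hley) (fun h => hyne h.symm)
      exact mem_inter.2 ⟨mem_dw.2 ⟨hBS hxB, y, hyA, hley⟩,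
        self_subset_dw hBS hxB⟩
  simp only [pmeet, mem_filter]
  refine ⟨hxD, ?_⟩
  intro b hb hle
  rcases mem_union.1 hxAB with hxA | hxB
  · obtain ⟨a, haA, hba⟩ := (mem_dw.1 (mem_inter.1 hb).1).2
    have hxa : x = a := hA x hxA a haA (po.le_trans _ _ _ hle hba)
    exact po.le_antisymm _ _ (hxa ▸ hba) hle
  · obtain ⟨a, haB, hba⟩ := (mem_dw.1 (mem_inter.1 hb).2).2
    have hxa : x = a := hB x hxB a haB (po.le_trans _ _ _ hle hba)
    exact po.le_antisymm _ _ (hxa ▸ hba) hle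

lemma dw_pmeet {S A B : Finset (Fin d)} :
    dw po S (pmeet po S A B) = dw po S A ∩ dw po S B := by
  ext z
  simp only [mem_inter, mem_dw]
  constructor
  · rintro ⟨hzS, m, hm, hzm⟩
    obtain ⟨hmD, -⟩ := mem_filter.1 hm
    obtain ⟨hmA, hmB⟩ := mem_inter.1 hmD
    obtain ⟨a, haA, hma⟩ := (mem_dw.1 hmA).2
    obtain ⟨b, hbB, hmb⟩ := (mem_dw.1 hmB).2
    exact ⟨⟨hzS, a, haA, po.le_trans _ _ _ hzm hma⟩,
           ⟨hzS, b, hbB, po.le_trans _ _ _ hzm hmb⟩⟩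
  · rintro ⟨⟨hzS, ha⟩, ⟨-, hb⟩⟩
    have hzD : z ∈ dw po S A ∩ dw po S B :=
      mem_inter.2 ⟨mem_dw.2 ⟨hzS, ha⟩, mem_dw.2 ⟨hzS, hb⟩⟩
    obtain ⟨m, hmD, hzm, hmax⟩ := exists_max_above po _ hzD
    refine ⟨hzS, m, ?_, hzm⟩
    simp only [pmeet, mem_filter]
    exact ⟨hmD, fun b hb hle => hmax b hb hle⟩

lemma supermod {S A B : Finset (Fin d)} {w : Fin d → ℝ} (hw : ∀ i, 0 ≤ w i)
    (hAS : A ⊆ S) (hBS : B ⊆ S) (hA : AC po A) (hB : AC po B) :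
    ∑ i ∈ A, w i + ∑ i ∈ B, w i ≤ ∑ i ∈ jn po A B, w i + ∑ i ∈ pmeet po S A B, w i := by
  have h1 : ∑ i ∈ A, w i + ∑ i ∈ B, w i = ∑ i ∈ A ∪ B, w i + ∑ i ∈ A ∩ B, w i :=
    (Finset.sum_union_inter).symm
  have h2 : ∑ i ∈ A ∪ B, w i = ∑ i ∈ (A ∪ B) \ jn po A B, w i + ∑ i ∈ jn po A B, w i :=
    (Finset.sum_sdiff jn_subset).symm
  have hdisj : Disjoint ((A ∪ B) \ jn po A B) (A ∩ B) :=
    Finset.disjoint_left.2 fun x hx hx' => (mem_sdiff.1 hx).2 (inter_subset_jn hA hB hx')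
  have h3 : ∑ i ∈ (A ∪ B) \ jn po A B, w i + ∑ i ∈ A ∩ B, w i
      = ∑ i ∈ ((A ∪ B) \ jn po A B) ∪ (A ∩ B), w i := (Finset.sum_union hdisj).symm
  have h4 : ((A ∪ B) \ jn po A B) ∪ (A ∩ B) ⊆ pmeet po S A B :=
    Finset.union_subset (sdiff_subset_pmeet hAS hBS hA hB) (inter_subset_pmeet hAS hBS hA hB)
  have h5 : ∑ i ∈ ((A ∪ B) \ jn po A B) ∪ (A ∩ B), w i ≤ ∑ i ∈ pmeet po S A B, w i :=
    Finset.sum_le_sum_of_subset_of_nonneg h4 (fun i _ _ => hw i)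
  linarith

lemma jn_restrict {A B S' : Finset (Fin d)} {x : Fin d}
    (hS' : ∀ y, y ∈ S' ↔ y ∈ (univ : Finset (Fin d)) ∧ po.le x y ∧ y ≠ x)
    (hA : ∀ a ∈ A, True) :
    True := trivial

lemma hitting (po : PartialOrder (Fin d)) :
    ∀ (n : ℕ) (S : Finset (Fin d)) (T : Finset (Finset (Fin d))), S.card ≤ n →
    (∀ A ∈ T, A ⊆ S ∧ AC po A ∧ A.Nonempty) →
    (∀ A ∈ T, ∀ B ∈ T, jn po A B ∈ T) →
    (∀ A ∈ T, ∀ B ∈ T, pmeet po S A B ∈ T ∧ pmeet po S A B ⊆ A ∪ B) →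
    ∃ C, C ⊆ S ∧ CH po C ∧ ∀ A ∈ T, (A ∩ C).Nonempty := by
  intro n
  induction n with
  | zero =>
    intro S T hcard hmem hjn hmt
    rcases T.eq_empty_or_nonempty with hT | ⟨A, hA⟩
    · exact ⟨∅, empty_subset _, fun a ha => absurd ha (notMem_empty a), by simp [hT]⟩
    · obtain ⟨hAS, -, a, ha⟩ := hmem A hA
      have : S = ∅ := Finset.card_eq_zero.1 (Nat.le_zero.1 hcard)
      exact absurd (hAS ha) (by simp [this])
  | succ n ih =>
    intro S T hcard hmem hjn hmt
    rcases T.eq_empty_or_nonempty with hT | hTne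
    · exact ⟨∅, empty_subset _, fun a ha => absurd ha (notMem_empty a), by simp [hT]⟩
    · -- find bottom element A₀
      obtain ⟨A₀, hA₀T, hA₀min⟩ :=
        Finset.exists_min_image T (fun A => (dw po S A).card) hTne
      have hbot : ∀ A ∈ T, dw po S A₀ ⊆ dw po S A := by
        intro A hAT
        have hMT : pmeet po S A₀ A ∈ T := (hmt A₀ hA₀T A hAT).1
        have hdwM : dw po S (pmeet po S A₀ A) = dw po S A₀ ∩ dw po S A := dw_pmeet
        have hsub : dw po S (pmeet po S A₀ A) ⊆ dw po S A₀ := by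
          rw [hdwM]; exact inter_subset_left
        have hcard' := hA₀min _ hMT
        have heq : dw po S (pmeet po S A₀ A) = dw po S A₀ :=
          Finset.eq_of_subset_of_card_le hsub hcard'
        rw [← heq, hdwM]
        exact inter_subset_right
      obtain ⟨hA₀S, hA₀ac, x, hxA₀⟩ := hmem A₀ hA₀T
      have hxS : x ∈ S := hA₀S hxA₀
      have hx : ∀ A ∈ T, ∃ a ∈ A, po.le x a := by
        intro A hAT
        have : x ∈ dw po S A₀ := self_subset_dw hA₀S hxA₀
        exact (mem_dw.1 (hbot A hAT this)).2
      set S' := S.filter (fun y => po.le x y ∧ y ≠ x) with hS'def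
      have hS'mem : ∀ y, y ∈ S' ↔ y ∈ S ∧ po.le x y ∧ y ≠ x := by
        intro y; simp [hS'def]
      have hS'S : S' ⊆ S := filter_subset _ _
      have hxS' : x ∉ S' := by simp [hS'mem]
      have hcard' : S'.card ≤ n := by
        have h1 : S' ⊆ S.erase x := by
          intro y hy
          obtain ⟨hyS, -, hyne⟩ := (hS'mem y).1 hy
          exact Finset.mem_erase.2 ⟨hyne, hyS⟩
        have := Finset.card_le_card h1
        have h2 := Finset.card_erase_of_mem hxS
        omega
      set T' := (T.filter (fun A => x ∉ A)).image (fun A => A ∩ S') with hT'def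
      -- key identities
      have key_dw : ∀ A : Finset (Fin d), A ⊆ S →
          dw po S' (A ∩ S') = dw po S A ∩ S' := by
        intro A hAS
        ext z
        simp only [mem_inter, mem_dw, hS'mem]
        constructor
        · rintro ⟨⟨hzS, hxz, hzx⟩, a, ha, hza⟩
          exact ⟨⟨hzS, a, ha.1, hza⟩, hzS, hxz, hzx⟩
        · rintro ⟨⟨hzS, a, haA, hza⟩, -, hxz, hzx⟩
          refine ⟨⟨hzS, hxz, hzx⟩, a, ?_, hza⟩
          have hxa : po.le x a := po.le_trans _ _ _ hxz hza
          have hax : a ≠ x := by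
            rintro rfl
            exact hzx (po.le_antisymm _ _ hza hxz)
          exact ⟨haA, hAS haA, hxa, hax⟩
      have key_jn : ∀ A B : Finset (Fin d), A ⊆ S → B ⊆ S →
          jn po (A ∩ S') (B ∩ S') = jn po A B ∩ S' := by
        intro A B hAS hBS
        have hU : (A ∩ S') ∪ (B ∩ S') = (A ∪ B) ∩ S' := (Finset.union_inter_distrib_right A B S').symm
        ext z
        simp only [jn, mem_filter, mem_inter, hU]
        constructor
        · rintro ⟨⟨hzAB, hzS'⟩, hmax⟩
          obtain ⟨hzS, hxz, hzx⟩ := (hS'mem z).1 hzS'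
          refine ⟨⟨hzAB, ?_⟩, hzS'⟩
          intro b hbAB hle
          by_cases hbz : b = z
          · exact hbz
          · have hbS' : b ∈ S' := by
              refine (hS'mem b).2 ⟨?_, po.le_trans _ _ _ hxz hle, ?_⟩
              · rcases mem_union.1 hbAB with h | h
                · exact hAS h
                · exact hBS h
              · rintro rfl
                exact hzx (po.le_antisymm _ _ hle hxz)
            exact hmax b ⟨hbAB, hbS'⟩ hle
        · rintro ⟨⟨hzAB, hmax⟩, hzS'⟩
          exact ⟨⟨hzAB, hzS'⟩, fun b hb hle => hmax b hb.1 hle⟩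
      have key_mt : ∀ A B : Finset (Fin d), A ⊆ S → B ⊆ S →
          pmeet po S' (A ∩ S') (B ∩ S') = pmeet po S A B ∩ S' := by
        intro A B hAS hBS
        have hdwA := key_dw A hAS
        have hdwB := key_dw B hBS
        have hD : dw po S' (A ∩ S') ∩ dw po S' (B ∩ S')
            = (dw po S A ∩ dw po S B) ∩ S' := by
          rw [hdwA, hdwB]
          ext z; simp only [mem_inter]; tauto
        ext z
        simp only [pmeet, mem_filter, hD, mem_inter]
        constructor
        · rintro ⟨⟨hzD, hzS'⟩, hmax⟩
          obtain ⟨hzS, hxz, hzx⟩ := (hS'mem z).1 hzS'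
          refine ⟨⟨hzD, ?_⟩, hzS'⟩
          intro y hyD hle
          by_cases hyz : y = z
          · exact hyz
          · have hyS : y ∈ S := dw_subset hyD.1
            have hyS' : y ∈ S' := by
              refine (hS'mem y).2 ⟨hyS, po.le_trans _ _ _ hxz hle, ?_⟩
              rintro rfl
              exact hzx (po.le_antisymm _ _ hle hxz)
            exact hmax y ⟨hyD, hyS'⟩ hle
        · rintro ⟨⟨hzD, hmax⟩, hzS'⟩
          exact ⟨⟨hzD, hzS'⟩, fun y hy hle => hmax y hy.1 hle⟩
      -- hypotheses for T'
      have hmem' : ∀ A' ∈ T', A' ⊆ S' ∧ AC po A' ∧ A'.Nonempty := by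
        intro A' hA'
        obtain ⟨A, hAf, rfl⟩ := Finset.mem_image.1 hA'
        obtain ⟨hAT, hxA⟩ := Finset.mem_filter.1 hAf
        obtain ⟨hAS, hAac, -⟩ := hmem A hAT
        refine ⟨inter_subset_right, AC_subset hAac inter_subset_left, ?_⟩
        obtain ⟨a, haA, hxa⟩ := hx A hAT
        have hax : a ≠ x := by rintro rfl; exact hxA haA
        exact ⟨a, mem_inter.2 ⟨haA, (hS'mem a).2 ⟨hAS haA, hxa, hax⟩⟩⟩
      have hjn' : ∀ A' ∈ T', ∀ B' ∈ T', jn po A' B' ∈ T' := by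
        intro A' hA' B' hB'
        obtain ⟨A, hAf, rfl⟩ := Finset.mem_image.1 hA'
        obtain ⟨B, hBf, rfl⟩ := Finset.mem_image.1 hB'
        obtain ⟨hAT, hxA⟩ := Finset.mem_filter.1 hAf
        obtain ⟨hBT, hxB⟩ := Finset.mem_filter.1 hBf
        rw [key_jn A B (hmem A hAT).1 (hmem B hBT).1]
        refine Finset.mem_image.2 ⟨jn po A B, Finset.mem_filter.2 ⟨hjn A hAT B hBT, ?_⟩, rfl⟩
        intro hcon
        rcases mem_union.1 (jn_subset hcon) with h | h
        · exact hxA h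
        · exact hxB h
      have hmt' : ∀ A' ∈ T', ∀ B' ∈ T',
          pmeet po S' A' B' ∈ T' ∧ pmeet po S' A' B' ⊆ A' ∪ B' := by
        intro A' hA' B' hB'
        obtain ⟨A, hAf, rfl⟩ := Finset.mem_image.1 hA'
        obtain ⟨B, hBf, rfl⟩ := Finset.mem_image.1 hB'
        obtain ⟨hAT, hxA⟩ := Finset.mem_filter.1 hAf
        obtain ⟨hBT, hxB⟩ := Finset.mem_filter.1 hBf
        have hAS := (hmem A hAT).1
        have hBS := (hmem B hBT).1
        have hkey := key_mt A B hAS hBS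
        constructor
        · rw [hkey]
          refine Finset.mem_image.2 ⟨pmeet po S A B,
            Finset.mem_filter.2 ⟨(hmt A hAT B hBT).1, ?_⟩, rfl⟩
          intro hcon
          rcases mem_union.1 ((hmt A hAT B hBT).2 hcon) with h | h
          · exact hxA h
          · exact hxB h
        · rw [hkey]
          intro z hz
          obtain ⟨hz1, hz2⟩ := mem_inter.1 hz
          rcases mem_union.1 ((hmt A hAT B hBT).2 hz1) with h | h
          · exact mem_union.2 (Or.inl (mem_inter.2 ⟨h, hz2⟩))
          · exact mem_union.2 (Or.inr (mem_inter.2 ⟨h, hz2⟩))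
      obtain ⟨C', hC'S, hC'ch, hC'hit⟩ := ih S' T' hcard' hmem' hjn' hmt'
      refine ⟨insert x C', ?_, ?_, ?_⟩
      · intro a ha
        rcases Finset.mem_insert.1 ha with rfl | h
        · exact hxS
        · exact hS'S (hC'S h)
      · intro a ha b hb
        rcases Finset.mem_insert.1 ha with rfl | ha' <;>
          rcases Finset.mem_insert.1 hb with rfl | hb'
        · exact Or.inl (po.le_refl _)
        · exact Or.inl ((hS'mem b).1 (hC'S hb')).2.1
        · exact Or.inr ((hS'mem a).1 (hC'S ha')).2.1
        · exact hC'ch a ha' b hb'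
      · intro A hAT
        by_cases hxA : x ∈ A
        · exact ⟨x, mem_inter.2 ⟨hxA, Finset.mem_insert_self x C'⟩⟩
        · have hA'T' : A ∩ S' ∈ T' :=
            Finset.mem_image.2 ⟨A, Finset.mem_filter.2 ⟨hAT, hxA⟩, rfl⟩
          obtain ⟨c, hc⟩ := hC'hit (A ∩ S') hA'T'
          obtain ⟨hc1, hc2⟩ := mem_inter.1 hc
          exact ⟨c, mem_inter.2 ⟨(mem_inter.1 hc1).1, Finset.mem_insert_of_mem hc2⟩⟩

def chainVecs (po : PartialOrder (Fin d)) : Set (Fin d → ℝ) :=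
  {x | ∃ C, CH po C ∧ x = ind C}

def suppF (w : Fin d → ℝ) : Finset (Fin d) := univ.filter (fun i => w i ≠ 0)

def tightF (po : PartialOrder (Fin d)) (w : Fin d → ℝ) : Finset (Finset (Fin d)) :=
  univ.filter (fun A => AC po A ∧ ∑ i ∈ A, w i = 1)

def Nall (d : ℕ) : ℕ := (univ : Finset (Finset (Fin d))).card

def meas (po : PartialOrder (Fin d)) (w : Fin d → ℝ) : ℕ :=
  (suppF w).card * (Nall d + 1) + (Nall d - (tightF po w).card)

lemma sum_ind (A C : Finset (Fin d)) : ∑ i ∈ A, ind C i = ((A ∩ C).card : ℝ) := by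
  classical
  simp only [ind]
  rw [Finset.sum_boole, Finset.filter_mem_eq_inter]

lemma inter_card_le_one {A C : Finset (Fin d)} (hA : AC po A) (hC : CH po C) :
    (A ∩ C).card ≤ 1 := by
  rw [Finset.card_le_one]
  intro a ha b hb
  obtain ⟨haA, haC⟩ := mem_inter.1 ha
  obtain ⟨hbA, hbC⟩ := mem_inter.1 hb
  rcases hC a haC b hbC with h | h
  · exact hA a haA b hbA h
  · exact (hA b hbA a haA h).symm

lemma sum_inter_supp (A : Finset (Fin d)) (w : Fin d → ℝ) :
    ∑ i ∈ A ∩ suppF w, w i = ∑ i ∈ A, w i := by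
  classical
  apply Finset.sum_subset inter_subset_left
  intro i hiA hni
  by_contra h
  exact hni (mem_inter.2 ⟨hiA, mem_filter.2 ⟨mem_univ i, h⟩⟩)

theorem FD_aux (po : PartialOrder (Fin d)) :
    ∀ (n : ℕ) (w : Fin d → ℝ), meas po w ≤ n → (∀ i, 0 ≤ w i) →
    (∀ A, AC po A → ∑ i ∈ A, w i ≤ 1) →
    w ∈ convexHull ℝ (chainVecs po) := by
  intro n
  induction n with
  | zero =>
    intro w hm hw0 hw1
    have hs : (suppF w).card = 0 := by
      have h0 : meas po w = 0 := Nat.le_zero.1 hm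
      unfold meas at h0
      have h1 : (suppF w).card * (Nall d + 1) = 0 := (Nat.add_eq_zero.1 h0).1
      rcases Nat.mul_eq_zero.1 h1 with h | h
      · exact h
      · exact absurd h (Nat.succ_ne_zero _)
    have hw : w = ind (∅ : Finset (Fin d)) := by
      funext i
      have : i ∉ suppF w := by
        rw [Finset.card_eq_zero.1 hs]; exact notMem_empty i
      simp only [suppF, mem_filter, mem_univ, true_and, not_not] at this
      simp [ind, this]
    exact subset_convexHull ℝ _ ⟨∅, fun a ha => absurd ha (notMem_empty a), hw⟩
  | succ n ih =>
    intro w hm hw0 hw1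
    by_cases hsupp : suppF w = ∅
    · have hw : w = ind (∅ : Finset (Fin d)) := by
        funext i
        have : i ∉ suppF w := by rw [hsupp]; exact notMem_empty i
        simp only [suppF, mem_filter, mem_univ, true_and, not_not] at this
        simp [ind, this]
      exact subset_convexHull ℝ _ ⟨∅, fun a ha => absurd ha (notMem_empty a), hw⟩
    · have hne : (suppF w).Nonempty := Finset.nonempty_iff_ne_empty.2 hsupp
      set S := suppF w with hSdef
      set T := univ.filter (fun A => A ⊆ S ∧ AC po A ∧ ∑ i ∈ A, w i = 1) with hTdef
      have hTmem : ∀ A, A ∈ T ↔ A ⊆ S ∧ AC po A ∧ ∑ i ∈ A, w i = 1 := by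
        intro A; simp [hTdef]
      have htight_in : ∀ A, AC po A → ∑ i ∈ A, w i = 1 → A ∩ S ∈ T := by
        intro A hAac hA1
        refine (hTmem _).2 ⟨inter_subset_right, AC_subset hAac inter_subset_left, ?_⟩
        rw [hSdef, sum_inter_supp]
        exact hA1
      have hmemT : ∀ A ∈ T, A ⊆ S ∧ AC po A ∧ A.Nonempty := by
        intro A hA
        obtain ⟨h1, h2, h3⟩ := (hTmem A).1 hA
        refine ⟨h1, h2, ?_⟩
        rcases A.eq_empty_or_nonempty with rfl | h
        · norm_num at h3
        · exact h
      have hclose : ∀ A ∈ T, ∀ B ∈ T,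
          jn po A B ∈ T ∧ pmeet po S A B ∈ T ∧ pmeet po S A B ⊆ A ∪ B := by
        intro A hA B hB
        obtain ⟨hAS, hAac, hA1⟩ := (hTmem A).1 hA
        obtain ⟨hBS, hBac, hB1⟩ := (hTmem B).1 hB
        have hsup := supermod (po := po) (S := S) hw0 hAS hBS hAac hBac
        have hj1 : ∑ i ∈ jn po A B, w i ≤ 1 := hw1 _ AC_jn
        have hm1 : ∑ i ∈ pmeet po S A B, w i ≤ 1 := hw1 _ AC_pmeet
        have hjeq : ∑ i ∈ jn po A B, w i = 1 := by linarith
        have hmeq : ∑ i ∈ pmeet po S A B, w i = 1 := by linarith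
        have hjT : jn po A B ∈ T := (hTmem _).2
          ⟨subset_trans jn_subset (union_subset hAS hBS), AC_jn, hjeq⟩
        have hmS : pmeet po S A B ⊆ S :=
          subset_trans pmeet_subset_inter (subset_trans inter_subset_left dw_subset)
        have hmT : pmeet po S A B ∈ T := (hTmem _).2 ⟨hmS, AC_pmeet, hmeq⟩
        have hE : ((A ∪ B) \ jn po A B) ∪ (A ∩ B) ⊆ pmeet po S A B :=
          union_subset (sdiff_subset_pmeet hAS hBS hAac hBac)
            (inter_subset_pmeet hAS hBS hAac hBac)
        have hdisj : Disjoint ((A ∪ B) \ jn po A B) (A ∩ B) :=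
          disjoint_left.2 fun x hx hx' => (mem_sdiff.1 hx).2 (inter_subset_jn hAac hBac hx')
        have hEsum : ∑ i ∈ ((A ∪ B) \ jn po A B) ∪ (A ∩ B), w i = 1 := by
          rw [Finset.sum_union hdisj]
          have h2 : ∑ i ∈ (A ∪ B) \ jn po A B, w i + ∑ i ∈ jn po A B, w i
              = ∑ i ∈ A ∪ B, w i := Finset.sum_sdiff jn_subset
          have h3 : ∑ i ∈ A ∪ B, w i + ∑ i ∈ A ∩ B, w i
              = ∑ i ∈ A, w i + ∑ i ∈ B, w i := Finset.sum_union_inter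
          linarith
        have hzero : ∑ i ∈ pmeet po S A B \ (((A ∪ B) \ jn po A B) ∪ (A ∩ B)), w i = 0 := by
          have h4 := Finset.sum_sdiff (f := w) hE
          linarith
        refine ⟨hjT, hmT, ?_⟩
        intro z hz
        by_cases hzE : z ∈ ((A ∪ B) \ jn po A B) ∪ (A ∩ B)
        · rcases mem_union.1 hzE with h | h
          · exact (mem_sdiff.1 h).1
          · exact mem_union.2 (Or.inl (mem_inter.1 h).1)
        · have h0 : w z = 0 :=
            (Finset.sum_eq_zero_iff_of_nonneg (fun j _ => hw0 j)).1 hzero z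
              (mem_sdiff.2 ⟨hz, hzE⟩)
          have hzS : z ∈ S := hmS hz
          rw [hSdef] at hzS
          simp only [suppF, mem_filter] at hzS
          exact absurd h0 hzS.2
      obtain ⟨C, hCS, hCch, hChit⟩ := hitting po S.card S T le_rfl hmemT
        (fun A hA B hB => (hclose A hA B hB).1)
        (fun A hA B hB => (hclose A hA B hB).2)
      obtain ⟨C₁, hC₁S, hC₁ch, hC₁ne, hC₁hit⟩ :
          ∃ C₁, C₁ ⊆ S ∧ CH po C₁ ∧ C₁.Nonempty ∧ ∀ A ∈ T, (A ∩ C₁).Nonempty := by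
        rcases C.eq_empty_or_nonempty with rfl | hCne
        · obtain ⟨i₀, hi₀⟩ := hne
          refine ⟨{i₀}, ?_, ?_, ⟨i₀, mem_singleton_self i₀⟩, ?_⟩
          · intro a ha; rw [mem_singleton.1 ha]; exact hi₀
          · intro a ha b hb
            rw [mem_singleton.1 ha, mem_singleton.1 hb]
            exact Or.inl (po.le_refl _)
          · intro A hA
            obtain ⟨c, hc⟩ := hChit A hA
            rw [inter_empty] at hc
            exact absurd hc (notMem_empty c)
        · exact ⟨C, hCS, hCch, hCne, hChit⟩
      -- epsilon
      obtain ⟨i₀, hi₀C, hi₀min⟩ := Finset.exists_min_image C₁ w hC₁ne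
      set D := univ.filter (fun A : Finset (Fin d) => AC po A ∧ A ∩ C₁ = ∅) with hDdef
      have hDne : D.Nonempty := ⟨∅, by
        simp only [hDdef, mem_filter, mem_univ, true_and, empty_inter, and_true]
        intro a ha; exact absurd ha (notMem_empty a)⟩
      obtain ⟨A₁, hA₁D, hA₁max⟩ := Finset.exists_max_image D (fun A => ∑ i ∈ A, w i) hDne
      obtain ⟨hA₁ac, hA₁C⟩ : AC po A₁ ∧ A₁ ∩ C₁ = ∅ := by
        have := mem_filter.1 hA₁D; exact ⟨this.2.1, this.2.2⟩
      set εa := w i₀ with hεa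
      set εb := 1 - ∑ i ∈ A₁, w i with hεb
      set ε := min εa εb with hε
      have hi₀S : i₀ ∈ S := hC₁S hi₀C
      have hεa_pos : 0 < εa := by
        rw [hSdef] at hi₀S
        simp only [suppF, mem_filter] at hi₀S
        exact lt_of_le_of_ne (hw0 i₀) (Ne.symm hi₀S.2)
      have hεb_pos : 0 < εb := by
        rw [hεb, sub_pos]
        rcases lt_or_eq_of_le (hw1 A₁ hA₁ac) with h | h
        · exact h
        · exfalso
          have hT1 : A₁ ∩ S ∈ T := htight_in A₁ hA₁ac h
          obtain ⟨c, hc⟩ := hC₁hit _ hT1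
          obtain ⟨hc1, hc2⟩ := mem_inter.1 hc
          have : c ∈ A₁ ∩ C₁ := mem_inter.2 ⟨(mem_inter.1 hc1).1, hc2⟩
          rw [hA₁C] at this
          exact absurd this (notMem_empty c)
      have hε_pos : 0 < ε := lt_min hεa_pos hεb_pos
      have hεa_le1 : εa ≤ 1 := by
        have := hw1 {i₀} (by intro a ha b hb _; rw [mem_singleton.1 ha, mem_singleton.1 hb])
        rwa [Finset.sum_singleton] at this
      have hε_le1 : ε ≤ 1 := le_trans (min_le_left _ _) hεa_le1
      have hwmin : ∀ i ∈ C₁, ε ≤ w i := fun i hi =>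
        le_trans (min_le_left _ _) (hi₀min i hi)
      have hdisj_le : ∀ A, AC po A → A ∩ C₁ = ∅ → ∑ i ∈ A, w i ≤ 1 - ε := by
        intro A hAac hAC
        have hAD : A ∈ D := by
          simp only [hDdef, mem_filter, mem_univ, true_and]; exact ⟨hAac, hAC⟩
        have h1 := hA₁max A hAD
        have h2 : εb ≤ 1 - ∑ i ∈ A, w i := by rw [hεb]; linarith
        have := min_le_right εa εb
        linarith
      by_cases hε1 : (1:ℝ) ≤ ε
      · -- w = ind C₁
        have hweq : w = ind C₁ := by
          funext i
          by_cases hiC : i ∈ C₁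
          · have h1 : (1:ℝ) ≤ w i := le_trans hε1 (hwmin i hiC)
            have h2 : w i ≤ 1 := by
              have := hw1 {i} (by intro a ha b hb _; rw [mem_singleton.1 ha, mem_singleton.1 hb])
              rwa [Finset.sum_singleton] at this
            simp [ind, hiC]
            linarith
          · have h3 : ∑ j ∈ ({i} : Finset (Fin d)), w j ≤ 1 - ε := by
              apply hdisj_le {i}
              · intro a ha b hb _; rw [mem_singleton.1 ha, mem_singleton.1 hb]
              · exact Finset.singleton_inter_of_notMem hiC
            rw [Finset.sum_singleton] at h3
            have h0 : 0 ≤ w i := hw0 i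
            simp only [ind, hiC, if_false]
            linarith
        rw [hweq]
        exact subset_convexHull ℝ _ ⟨C₁, hC₁ch, rfl⟩
      · push_neg at hε1
        have h1ε : (0:ℝ) < 1 - ε := by linarith
        have hne0 : (1:ℝ) - ε ≠ 0 := ne_of_gt h1ε
        set w' := fun i => (1 - ε)⁻¹ * (w i - ε * ind C₁ i) with hw'def
        have hw'0 : ∀ i, 0 ≤ w' i := by
          intro i
          apply mul_nonneg (le_of_lt (inv_pos.2 h1ε))
          by_cases hiC : i ∈ C₁
          · have := hwmin i hiC; simp only [ind, hiC, if_true]; linarith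
          · simp only [ind, hiC, if_false]; linarith [hw0 i]
        have hsum' : ∀ A : Finset (Fin d), ∑ i ∈ A, w' i
            = (1 - ε)⁻¹ * (∑ i ∈ A, w i - ε * ((A ∩ C₁).card : ℝ)) := by
          intro A
          simp only [hw'def]
          rw [← Finset.mul_sum]
          congr 1
          rw [Finset.sum_sub_distrib, ← Finset.mul_sum, sum_ind]
        have hw'1 : ∀ A, AC po A → ∑ i ∈ A, w' i ≤ 1 := by
          intro A hAac
          rw [hsum' A]
          have hkey : ∑ i ∈ A, w i - ε * ((A ∩ C₁).card : ℝ) ≤ 1 - ε := by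
            rcases (A ∩ C₁).eq_empty_or_nonempty with hAC | hAC
            · rw [hAC]
              simp only [card_empty, Nat.cast_zero, mul_zero, sub_zero]
              exact hdisj_le A hAac hAC
            · have hcard1 : (A ∩ C₁).card = 1 :=
                le_antisymm (inter_card_le_one hAac hC₁ch) (Finset.card_pos.2 hAC)
              rw [hcard1]
              have := hw1 A hAac
              push_cast
              linarith
          calc (1-ε)⁻¹ * (∑ i ∈ A, w i - ε * ((A ∩ C₁).card : ℝ))
              ≤ (1-ε)⁻¹ * (1-ε) :=
                mul_le_mul_of_nonneg_left hkey (inv_nonneg.2 (le_of_lt h1ε))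
            _ = 1 := inv_mul_cancel₀ hne0
        have hsupp' : suppF w' ⊆ suppF w := by
          intro i hi
          simp only [suppF, mem_filter, mem_univ, true_and] at hi ⊢
          intro h0
          apply hi
          have hiC : i ∉ C₁ := by
            intro hc
            have h5 := hC₁S hc
            rw [hSdef] at h5
            simp only [suppF, mem_filter] at h5
            exact h5.2 h0
          simp only [hw'def]
          simp [ind, hiC, h0]
        have htight' : ∀ A, AC po A → ∑ i ∈ A, w i = 1 → ∑ i ∈ A, w' i = 1 := by
          intro A hAac hA1
          have hAT : A ∩ S ∈ T := htight_in A hAac hA1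
          obtain ⟨c, hc⟩ := hC₁hit _ hAT
          have hcA : c ∈ A ∩ C₁ := by
            obtain ⟨hc1, hc2⟩ := mem_inter.1 hc
            exact mem_inter.2 ⟨(mem_inter.1 hc1).1, hc2⟩
          have hcard1 : (A ∩ C₁).card = 1 :=
            le_antisymm (inter_card_le_one hAac hC₁ch) (Finset.card_pos.2 ⟨c, hcA⟩)
          rw [hsum' A, hA1, hcard1]
          rw [Nat.cast_one, mul_one]
          exact inv_mul_cancel₀ hne0
        have htsub : tightF po w ⊆ tightF po w' := by
          intro A hA
          simp only [tightF, mem_filter, mem_univ, true_and] at hA ⊢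
          exact ⟨hA.1, htight' A hA.1 hA.2⟩
        have hmeas' : meas po w' < meas po w := by
          rcases le_total εa εb with hab | hab
          · have hεeq : ε = εa := min_eq_left hab
            have hw'i₀ : w' i₀ = 0 := by
              simp only [hw'def]
              simp only [ind, hi₀C, if_true, mul_one]
              rw [hεeq, hεa]
              simp
            have hssub : suppF w' ⊂ suppF w := by
              refine ⟨hsupp', fun hcon => ?_⟩
              have hi₀supp : i₀ ∈ suppF w := by rw [← hSdef]; exact hi₀S
              have h6 := hcon hi₀supp
              simp only [suppF, mem_filter] at h6
              exact h6.2 hw'i₀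
            have hlt := Finset.card_lt_card hssub
            have hstep : ((suppF w').card + 1) * (Nall d + 1)
                ≤ (suppF w).card * (Nall d + 1) := Nat.mul_le_mul_right _ hlt
            unfold meas
            calc (suppF w').card * (Nall d + 1) + (Nall d - (tightF po w').card)
                < (suppF w').card * (Nall d + 1) + (Nall d + 1) :=
                  Nat.add_lt_add_left (by omega) _
              _ = ((suppF w').card + 1) * (Nall d + 1) := by ring
              _ ≤ (suppF w).card * (Nall d + 1) := hstep
              _ ≤ (suppF w).card * (Nall d + 1) + (Nall d - (tightF po w).card) :=
                  Nat.le_add_right _ _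
          · have hεeq : ε = εb := min_eq_right hab
            have hsA₁ : ∑ i ∈ A₁, w i = 1 - ε := by rw [hεeq, hεb]; ring
            have hA₁tight' : ∑ i ∈ A₁, w' i = 1 := by
              rw [hsum' A₁, hA₁C, hsA₁]
              simp [inv_mul_cancel₀ hne0]
            have hA₁nott : A₁ ∉ tightF po w := by
              simp only [tightF, mem_filter, mem_univ, true_and, not_and]
              intro _
              rw [hsA₁]
              intro hcon
              have : ε = 0 := by linarith
              exact absurd this (ne_of_gt hε_pos)
            have htssub : tightF po w ⊂ tightF po w' := by
              refine ⟨htsub, fun hcon => hA₁nott (hcon ?_)⟩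
              simp only [tightF, mem_filter, mem_univ, true_and]
              exact ⟨hA₁ac, hA₁tight'⟩
            have hlt : (tightF po w).card < (tightF po w').card :=
              Finset.card_lt_card htssub
            have ht' : (tightF po w').card ≤ Nall d := Finset.card_filter_le _ _
            have hstep : (suppF w').card * (Nall d + 1)
                ≤ (suppF w).card * (Nall d + 1) :=
              Nat.mul_le_mul_right _ (Finset.card_le_card hsupp')
            unfold meas
            have hsub2 : Nall d - (tightF po w').card < Nall d - (tightF po w).card := by
              omega
            exact add_lt_add_of_le_of_lt hstep hsub2
        have hrec : w' ∈ convexHull ℝ (chainVecs po) :=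
          ih w' (by omega) hw'0 hw'1
        have hcomb := (convex_convexHull ℝ (chainVecs po))
          (subset_convexHull ℝ _ ⟨C₁, hC₁ch, rfl⟩) hrec
          (le_of_lt hε_pos) (by linarith : (0:ℝ) ≤ 1 - ε) (by ring)
        have hweq : w = ε • ind C₁ + (1 - ε) • w' := by
          funext i
          simp only [Pi.add_apply, Pi.smul_apply, smul_eq_mul, hw'def]
          rw [mul_inv_cancel_left₀ hne0]
          ring
        rw [hweq]
        exact hcomb


lemma sum_snoc_mul (z : Fin (d+1) → ℝ) (b : Fin d → ℝ) (r : ℝ) :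
    ∑ i : Fin (d+1), z i * (Fin.snoc b r : Fin (d+1) → ℝ) i
      = (∑ i : Fin d, z (Fin.castSucc i) * b i) + z (Fin.last d) * r := by
  rw [Fin.sum_univ_castSucc]
  simp

lemma singleton_AC {po : PartialOrder (Fin d)} (i : Fin d) : AC po {i} := by
  intro a ha b hb _
  rw [mem_singleton.1 ha, mem_singleton.1 hb]

lemma empty_AC {po : PartialOrder (Fin d)} : AC po (∅ : Finset (Fin d)) := by
  intro a ha; exact absurd ha (notMem_empty a)

lemma singleton_CH {po : PartialOrder (Fin d)} (i : Fin d) : CH po {i} := by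
  intro a ha b hb
  rw [mem_singleton.1 ha, mem_singleton.1 hb]
  exact Or.inl (po.le_refl _)

lemma empty_CH {po : PartialOrder (Fin d)} : CH po (∅ : Finset (Fin d)) := by
  intro a ha; exact absurd ha (notMem_empty a)

lemma ind_mem_chainPolytope {po : PartialOrder (Fin d)} {A : Finset (Fin d)}
    (hA : AC po A) : ind A ∈ chainPolytope po.le := by
  constructor
  · intro i
    simp only [ind]
    split <;> norm_num
  · intro c hc
    have hch : CH po c := by
      intro a ha b hb
      by_cases hab : a = b
      · rw [hab]; exact Or.inl (po.le_refl b)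
      · exact hc.1 (Finset.mem_coe.2 ha) (Finset.mem_coe.2 hb) hab
    rw [sum_ind, Finset.inter_comm]
    have := inter_card_le_one hA hch
    exact_mod_cast this

lemma zero_mem_chainPolytope (po : PartialOrder (Fin d)) :
    (0 : Fin d → ℝ) ∈ chainPolytope po.le := by
  have h := ind_mem_chainPolytope (po := po) empty_AC
  have : ind (∅ : Finset (Fin d)) = (0 : Fin d → ℝ) := by
    funext i; simp [ind]
  rwa [this] at h

lemma chain_sum_le {po : PartialOrder (Fin d)} {x : Fin d → ℝ}
    (hx : x ∈ chainPolytope po.le) {C : Finset (Fin d)} (hC : CH po C) :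
    ∑ i ∈ C, x i ≤ 1 := by
  have hch : IsChain po.le (↑C : Set (Fin d)) := by
    intro a ha b hb _
    exact hC a (Finset.mem_coe.1 ha) b (Finset.mem_coe.1 hb)
  obtain ⟨M, hM, hCM⟩ := hch.exists_maxChain
  have hfin : M.Finite := Set.toFinite M
  have hcoe : (hfin.toFinset : Set (Fin d)) = M := hfin.coe_toFinset
  have hsum := hx.2 hfin.toFinset (by rw [hcoe]; exact hM)
  have hsub : C ⊆ hfin.toFinset := by
    intro i hi
    rw [Set.Finite.mem_toFinset]
    exact hCM (Finset.mem_coe.2 hi)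
  calc ∑ i ∈ C, x i ≤ ∑ i ∈ hfin.toFinset, x i :=
        Finset.sum_le_sum_of_subset_of_nonneg hsub (fun i _ _ => hx.1 i)
    _ ≤ 1 := hsum

lemma coord_le_one {po : PartialOrder (Fin d)} {x : Fin d → ℝ}
    (hx : x ∈ chainPolytope po.le) (i : Fin d) : x i ≤ 1 := by
  have := chain_sum_le hx (singleton_CH (po := po) i)
  rwa [Finset.sum_singleton] at this

lemma mem_dualPoly_hull_iff {n : ℕ} (G : Set (Fin n → ℝ)) (z : Fin n → ℝ) :
    z ∈ dualPoly (convexHull ℝ G) ↔ ∀ y ∈ G, ∑ i, z i * y i ≤ 1 := by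
  constructor
  · intro h y hy
    exact h y (subset_convexHull ℝ G hy)
  · intro h y hy
    have hconv : Convex ℝ {y : Fin n → ℝ | ∑ i, z i * y i ≤ 1} := by
      intro p hp q hq a b ha hb hab
      simp only [Set.mem_setOf_eq] at hp hq ⊢
      have hsum : ∑ i, z i * (a • p + b • q) i
          = a * ∑ i, z i * p i + b * ∑ i, z i * q i := by
        rw [Finset.mul_sum, Finset.mul_sum, ← Finset.sum_add_distrib]
        refine Finset.sum_congr rfl fun i _ => ?_
        simp only [Pi.add_apply, Pi.smul_apply, smul_eq_mul]; ring
      rw [hsum]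
      have h1 := mul_le_mul_of_nonneg_left hp ha
      have h2 := mul_le_mul_of_nonneg_left hq hb
      linarith
    exact convexHull_min h hconv hy

lemma snoc_affine_mem {c e : ℝ} {W : Set (Fin (d+1) → ℝ)} (hW : Convex ℝ W)
    {s : Set (Fin d → ℝ)}
    (h : ∀ x ∈ s, (Fin.snoc (fun i => c * x i) e : Fin (d+1) → ℝ) ∈ W)
    {a : Fin d → ℝ} (ha : a ∈ convexHull ℝ s) :
    (Fin.snoc (fun i => c * a i) e : Fin (d+1) → ℝ) ∈ W := by
  have hsub : convexHull ℝ s ⊆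
      {x : Fin d → ℝ | (Fin.snoc (fun i => c * x i) e : Fin (d+1) → ℝ) ∈ W} := by
    apply convexHull_min h
    intro p hp q hq α β hα hβ hαβ
    have key : (Fin.snoc (fun i => c * (α • p + β • q) i) e : Fin (d+1) → ℝ)
        = α • (Fin.snoc (fun i => c * p i) e : Fin (d+1) → ℝ)
          + β • (Fin.snoc (fun i => c * q i) e : Fin (d+1) → ℝ) := by
      funext j
      refine Fin.lastCases ?_ (fun i => ?_) j
      · simp only [Fin.snoc_last, Pi.add_apply, Pi.smul_apply, Fin.snoc_last,
          smul_eq_mul]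
        rw [← add_mul, hαβ, one_mul]
      · simp only [Fin.snoc_castSucc, Pi.add_apply, Pi.smul_apply, Fin.snoc_castSucc,
          smul_eq_mul]
        ring
    show (Fin.snoc (fun i => c * (α • p + β • q) i) e : Fin (d+1) → ℝ) ∈ W
    rw [key]
    exact hW hp hq hα hβ hαβ
  exact hsub ha

lemma sum_mul_ind (u : Fin d → ℝ) (A : Finset (Fin d)) :
    ∑ i : Fin d, u i * ind A i = ∑ i ∈ A, u i := by
  have h : ∀ i, u i * ind A i = if i ∈ A then u i else 0 := by
    intro i; simp only [ind]; split <;> simp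
  simp_rw [h]
  rw [Finset.sum_ite_mem, Finset.univ_inter]

lemma sum_ind_mul (x : Fin d → ℝ) (A : Finset (Fin d)) (c : ℝ) :
    ∑ i : Fin d, (c * ind A i) * x i = c * ∑ i ∈ A, x i := by
  have h : ∀ i, (c * ind A i) * x i = c * (x i * ind A i) := fun i => by ring
  simp_rw [h]
  rw [← Finset.mul_sum, sum_mul_ind]

lemma dualPoly_convex {n : ℕ} (S : Set (Fin n → ℝ)) : Convex ℝ (dualPoly S) := by
  intro x hx y hy a b ha hb hab
  intro g hg
  have h1 := hx g hg
  have h2 := hy g hg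
  have hsum : ∑ i, (a • x + b • y) i * g i
      = a * ∑ i, x i * g i + b * ∑ i, y i * g i := by
    rw [Finset.mul_sum, Finset.mul_sum, ← Finset.sum_add_distrib]
    refine Finset.sum_congr rfl fun i _ => ?_
    simp only [Pi.add_apply, Pi.smul_apply, smul_eq_mul]; ring
  rw [hsum]
  have h3 := mul_le_mul_of_nonneg_left h1 ha
  have h4 := mul_le_mul_of_nonneg_left h2 hb
  linarith

theorem part2 (d : ℕ) (P Q : PartialOrder (Fin d)) :
    ∃ V : Finset (Fin (d + 1) → ℝ), (∀ v ∈ V, IsLatticePoint v) ∧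
      dualPoly (OmegaPoly (chainPolytope P.le) (chainPolytope Q.le)) =
        convexHull ℝ (V : Set (Fin (d + 1) → ℝ)) := by
  classical
  set G : Set (Fin (d+1) → ℝ) :=
    ((fun x => Fin.snoc x (1 : ℝ)) '' chainPolytope P.le) ∪
    ((fun x => Fin.snoc (-x) (-1 : ℝ)) '' chainPolytope Q.le) with hG
  have hΩ : OmegaPoly (chainPolytope P.le) (chainPolytope Q.le) = convexHull ℝ G := rfl
  set VP : Finset (Fin (d+1) → ℝ) :=
    (univ.filter (fun C : Finset (Fin d) => CH P C)).image
      (fun C => (Fin.snoc (fun i => 2 * ind C i) (-1) : Fin (d+1) → ℝ)) with hVP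
  set VQ : Finset (Fin (d+1) → ℝ) :=
    (univ.filter (fun C : Finset (Fin d) => CH Q C)).image
      (fun C => (Fin.snoc (fun i => (-2) * ind C i) (1:ℝ) : Fin (d+1) → ℝ)) with hVQ
  have hWconv : Convex ℝ (convexHull ℝ ((VP ∪ VQ : Finset (Fin (d+1) → ℝ)) : Set (Fin (d+1) → ℝ))) :=
    convex_convexHull _ _
  have hVPin : ∀ x ∈ chainVecs P,
      (Fin.snoc (fun i => 2 * x i) (-1) : Fin (d+1) → ℝ)
        ∈ convexHull ℝ ((VP ∪ VQ : Finset (Fin (d+1) → ℝ)) : Set (Fin (d+1) → ℝ)) := by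
    rintro x ⟨C, hC, rfl⟩
    apply subset_convexHull
    exact Finset.mem_coe.2 (Finset.mem_union.2 (Or.inl (Finset.mem_image.2
      ⟨C, mem_filter.2 ⟨mem_univ _, hC⟩, rfl⟩)))
  have hVQin : ∀ x ∈ chainVecs Q,
      (Fin.snoc (fun i => (-2) * x i) (1:ℝ) : Fin (d+1) → ℝ)
        ∈ convexHull ℝ ((VP ∪ VQ : Finset (Fin (d+1) → ℝ)) : Set (Fin (d+1) → ℝ)) := by
    rintro x ⟨C, hC, rfl⟩
    apply subset_convexHull
    exact Finset.mem_coe.2 (Finset.mem_union.2 (Or.inr (Finset.mem_image.2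
      ⟨C, mem_filter.2 ⟨mem_univ _, hC⟩, rfl⟩)))
  refine ⟨VP ∪ VQ, ?_, ?_⟩
  · intro v hv
    rcases Finset.mem_union.1 hv with hv | hv
    · obtain ⟨C, hC, rfl⟩ := Finset.mem_image.1 hv
      intro i
      refine Fin.lastCases ?_ (fun j => ?_) i
      · exact ⟨-1, by simp [Fin.snoc_last]⟩
      · by_cases hj : j ∈ C
        · exact ⟨2, by simp [Fin.snoc_castSucc, ind, hj]⟩
        · exact ⟨0, by simp [Fin.snoc_castSucc, ind, hj]⟩
    · obtain ⟨C, hC, rfl⟩ := Finset.mem_image.1 hv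
      intro i
      refine Fin.lastCases ?_ (fun j => ?_) i
      · exact ⟨1, by simp [Fin.snoc_last]⟩
      · by_cases hj : j ∈ C
        · exact ⟨-2, by simp [Fin.snoc_castSucc, ind, hj]⟩
        · exact ⟨0, by simp [Fin.snoc_castSucc, ind, hj]⟩
  · apply Set.Subset.antisymm
    · -- dual ⊆ hull
      intro z hz
      rw [hΩ] at hz
      have hgen := (mem_dualPoly_hull_iff G z).1 hz
      set u := fun i : Fin d => z (Fin.castSucc i) with hu
      set t := z (Fin.last d) with ht
      have hP : ∀ A : Finset (Fin d), AC P A → (∑ i ∈ A, u i) + t ≤ 1 := by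
        intro A hA
        have hyG : (Fin.snoc (ind A) 1 : Fin (d+1) → ℝ) ∈ G :=
          Or.inl ⟨ind A, ind_mem_chainPolytope hA, rfl⟩
        have h1 := hgen _ hyG
        rw [sum_snoc_mul] at h1
        rw [sum_mul_ind] at h1
        linarith
      have hQ : ∀ B : Finset (Fin d), AC Q B → -(∑ i ∈ B, u i) - t ≤ 1 := by
        intro B hB
        have hyG : (Fin.snoc (-(ind B)) (-1) : Fin (d+1) → ℝ) ∈ G :=
          Or.inr ⟨ind B, ind_mem_chainPolytope hB, rfl⟩
        have h1 := hgen _ hyG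
        rw [sum_snoc_mul] at h1
        have h2 : ∑ i : Fin d, z (Fin.castSucc i) * (-(ind B)) i = -∑ i ∈ B, u i := by
          rw [← sum_mul_ind u B, ← Finset.sum_neg_distrib]
          refine Finset.sum_congr rfl fun i _ => ?_
          simp only [Pi.neg_apply, hu]; ring
        rw [h2] at h1
        linarith
      set uplus := fun i => max (u i) 0 with hup
      set uminus := fun i => max (-u i) 0 with hum
      have humin : ∀ i, u i = uplus i - uminus i := by
        intro i; simp only [hup, hum]
        rcases le_total (u i) 0 with h | h
        · rw [max_eq_right h, max_eq_left (by linarith)]; ring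
        · rw [max_eq_left h, max_eq_right (by linarith)]; ring
      have hup0 : ∀ i, 0 ≤ uplus i := fun i => le_max_right _ _
      have hum0 : ∀ i, 0 ≤ uminus i := fun i => le_max_right _ _
      have hPp : ∀ A, AC P A → ∑ i ∈ A, uplus i ≤ 1 - t := by
        intro A hA
        have h1 : ∑ i ∈ A, uplus i = ∑ i ∈ A.filter (fun i => 0 < u i), u i := by
          rw [Finset.sum_filter]
          refine Finset.sum_congr rfl fun i _ => ?_
          simp only [hup]
          rcases le_or_gt (u i) 0 with h | h
          · rw [max_eq_right h, if_neg (not_lt.2 h)]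
          · rw [max_eq_left (le_of_lt h), if_pos h]
        have h2 := hP _ (AC_subset hA (filter_subset (fun i => 0 < u i) A))
        rw [h1]
        linarith
      have hQm : ∀ B, AC Q B → ∑ i ∈ B, uminus i ≤ 1 + t := by
        intro B hB
        have h1 : ∑ i ∈ B, uminus i = ∑ i ∈ B.filter (fun i => u i < 0), -u i := by
          rw [Finset.sum_filter]
          refine Finset.sum_congr rfl fun i _ => ?_
          simp only [hum]
          rcases lt_or_ge (u i) 0 with h | h
          · rw [if_pos h, max_eq_left (by linarith)]
          · rw [if_neg (not_lt.2 h), max_eq_right (by linarith)]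
        have h2 := hQ _ (AC_subset hB (filter_subset (fun i => u i < 0) B))
        rw [h1, Finset.sum_neg_distrib]
        linarith
      have ht1 : t ≤ 1 := by
        have := hP ∅ empty_AC
        rw [Finset.sum_empty] at this; linarith
      have ht2 : -1 ≤ t := by
        have := hQ ∅ empty_AC
        rw [Finset.sum_empty] at this; linarith
      rcases eq_or_lt_of_le ht1 with hteq | htlt
      · -- t = 1 : uplus = 0
        have huz : ∀ i, uplus i = 0 := by
          intro i
          have h1 := hPp {i} (singleton_AC i)
          rw [Finset.sum_singleton, hteq] at h1
          have h2 := hup0 i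
          linarith
        have hbgood : ∀ B, AC Q B → ∑ i ∈ B, (fun i => uminus i / 2) i ≤ 1 := by
          intro B hB
          have h1 := hQm B hB
          rw [hteq] at h1
          have h2 : ∑ i ∈ B, uminus i / 2 = (∑ i ∈ B, uminus i) / 2 := by
            rw [Finset.sum_div]
          simp only
          rw [h2]
          linarith
        have hb : (fun i => uminus i / 2) ∈ convexHull ℝ (chainVecs Q) :=
          FD_aux Q (meas Q (fun i => uminus i / 2)) _ le_rfl
            (fun i => by positivity) hbgood
        have hzeq : z = (Fin.snoc (fun i => (-2) * (uminus i / 2)) (1:ℝ) : Fin (d+1) → ℝ) := by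
          funext j
          refine Fin.lastCases ?_ (fun i => ?_) j
          · rw [Fin.snoc_last, ← ht, hteq]
          · rw [Fin.snoc_castSucc]
            have h1 := humin i
            have h2 := huz i
            have h3 : z (Fin.castSucc i) = u i := rfl
            rw [h3]
            linarith [h1, h2]
        rw [hzeq]
        exact snoc_affine_mem hWconv hVQin hb
      rcases eq_or_lt_of_le ht2 with hteq | htlt2
      · -- t = -1 : uminus = 0
        have huz : ∀ i, uminus i = 0 := by
          intro i
          have h1 := hQm {i} (singleton_AC i)
          rw [Finset.sum_singleton, ← hteq] at h1
          have h2 := hum0 i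
          linarith
        have hagood : ∀ A, AC P A → ∑ i ∈ A, (fun i => uplus i / 2) i ≤ 1 := by
          intro A hA
          have h1 := hPp A hA
          rw [← hteq] at h1
          have h2 : ∑ i ∈ A, uplus i / 2 = (∑ i ∈ A, uplus i) / 2 := by
            rw [Finset.sum_div]
          simp only
          rw [h2]
          linarith
        have ha : (fun i => uplus i / 2) ∈ convexHull ℝ (chainVecs P) :=
          FD_aux P (meas P (fun i => uplus i / 2)) _ le_rfl
            (fun i => by positivity) hagood
        have hzeq : z = (Fin.snoc (fun i => 2 * (uplus i / 2)) (-1:ℝ) : Fin (d+1) → ℝ) := by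
          funext j
          refine Fin.lastCases ?_ (fun i => ?_) j
          · rw [Fin.snoc_last, ← ht, ← hteq]
          · rw [Fin.snoc_castSucc]
            have h1 := humin i
            have h2 := huz i
            have h3 : z (Fin.castSucc i) = u i := rfl
            rw [h3]
            linarith
        rw [hzeq]
        exact snoc_affine_mem hWconv hVPin ha
      · -- -1 < t < 1
        have h1t : (0:ℝ) < 1 - t := by linarith
        have h2t : (0:ℝ) < 1 + t := by linarith
        set a := fun i => uplus i / (1 - t) with hadef
        set b := fun i => uminus i / (1 + t) with hbdef
        have hagood : ∀ A, AC P A → ∑ i ∈ A, a i ≤ 1 := by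
          intro A hA
          have h1 := hPp A hA
          simp only [hadef]
          rw [← Finset.sum_div]
          rw [div_le_one h1t]
          exact h1
        have hbgood : ∀ B, AC Q B → ∑ i ∈ B, b i ≤ 1 := by
          intro B hB
          have h1 := hQm B hB
          simp only [hbdef]
          rw [← Finset.sum_div]
          rw [div_le_one h2t]
          exact h1
        have ha : a ∈ convexHull ℝ (chainVecs P) :=
          FD_aux P (meas P a) _ le_rfl (fun i => by positivity) hagood
        have hb : b ∈ convexHull ℝ (chainVecs Q) :=
          FD_aux Q (meas Q b) _ le_rfl (fun i => by positivity) hbgood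
        have hpA := snoc_affine_mem hWconv hVPin ha
        have hpB := snoc_affine_mem hWconv hVQin hb
        set lam := (1 - t) / 2 with hlam
        have hlam0 : 0 ≤ lam := by positivity
        have hlam1 : 0 ≤ 1 - lam := by
          rw [hlam]; linarith
        have hzeq : z = lam • (Fin.snoc (fun i => 2 * a i) (-1:ℝ) : Fin (d+1) → ℝ)
            + (1 - lam) • (Fin.snoc (fun i => (-2) * b i) (1:ℝ) : Fin (d+1) → ℝ) := by
          funext j
          refine Fin.lastCases ?_ (fun i => ?_) j
          · simp only [Pi.add_apply, Pi.smul_apply, Fin.snoc_last, smul_eq_mul]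
            rw [← ht, hlam]; ring
          · simp only [Pi.add_apply, Pi.smul_apply, Fin.snoc_castSucc, smul_eq_mul]
            have h3 : z (Fin.castSucc i) = u i := rfl
            rw [h3, humin i]
            have hne1 : (1:ℝ) - t ≠ 0 := ne_of_gt h1t
            have hne2 : (1:ℝ) + t ≠ 0 := ne_of_gt h2t
            have h4 : lam * (2 * a i) = uplus i := by
              simp only [hlam, hadef]
              field_simp
            have h5 : (1 - lam) * ((-2) * b i) = -uminus i := by
              simp only [hlam, hbdef]
              field_simp
              ring
            linarith [h4, h5]
        rw [hzeq]
        exact hWconv hpA hpB hlam0 hlam1 (by ring)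
    · rw [hΩ]
      apply convexHull_min ?_ (dualPoly_convex _)
      intro v hv
      rw [mem_dualPoly_hull_iff]
      rcases Finset.mem_union.1 (Finset.mem_coe.1 hv) with hv' | hv'
      · obtain ⟨C, hCf, rfl⟩ := Finset.mem_image.1 hv'
        have hC : CH P C := (mem_filter.1 hCf).2
        rintro y (⟨x, hx, rfl⟩ | ⟨x, hx, rfl⟩)
        · rw [sum_snoc_mul]
          simp only [Fin.snoc_castSucc, Fin.snoc_last]
          rw [sum_ind_mul]
          have hc := chain_sum_le hx hC
          linarith
        · rw [sum_snoc_mul]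
          simp only [Fin.snoc_castSucc, Fin.snoc_last]
          have h2 : ∑ i : Fin d, (2 * ind C i) * (-x) i = -(2 * ∑ i ∈ C, x i) := by
            rw [← sum_ind_mul x C 2, ← Finset.sum_neg_distrib]
            refine Finset.sum_congr rfl fun i _ => ?_
            simp only [Pi.neg_apply]; ring
          rw [h2]
          have h3 : 0 ≤ ∑ i ∈ C, x i := Finset.sum_nonneg fun i _ => hx.1 i
          linarith
      · obtain ⟨C, hCf, rfl⟩ := Finset.mem_image.1 hv'
        have hC : CH Q C := (mem_filter.1 hCf).2
        rintro y (⟨x, hx, rfl⟩ | ⟨x, hx, rfl⟩)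
        · rw [sum_snoc_mul]
          simp only [Fin.snoc_castSucc, Fin.snoc_last]
          have h2 : ∑ i : Fin d, ((-2) * ind C i) * x i = -(2 * ∑ i ∈ C, x i) := by
            rw [← sum_ind_mul x C 2, ← Finset.sum_neg_distrib]
            refine Finset.sum_congr rfl fun i _ => ?_
            ring
          rw [h2]
          have h3 : 0 ≤ ∑ i ∈ C, x i := Finset.sum_nonneg fun i _ => hx.1 i
          linarith
        · rw [sum_snoc_mul]
          simp only [Fin.snoc_castSucc, Fin.snoc_last]
          have h2 : ∑ i : Fin d, ((-2) * ind C i) * (-x) i = 2 * ∑ i ∈ C, x i := by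
            rw [← sum_ind_mul x C 2]
            refine Finset.sum_congr rfl fun i _ => ?_
            simp only [Pi.neg_apply]; ring
          rw [h2]
          have hc := chain_sum_le hx hC
          linarith

lemma interior_perturb {n : ℕ} {s : Set (Fin n → ℝ)} {z : Fin n → ℝ} (hz : z ∈ interior s) :
    ∃ ε > 0, ∀ (i : Fin n) (c : ℝ), |c| < ε → z + c • (Pi.single i 1 : Fin n → ℝ) ∈ s := by
  obtain ⟨ε, hε, hball⟩ := Metric.isOpen_iff.1 isOpen_interior z hz
  refine ⟨ε, hε, fun i c hc => interior_subset (hball ?_)⟩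
  rw [Metric.mem_ball, dist_eq_norm, add_sub_cancel_left]
  calc ‖c • (Pi.single i 1 : Fin n → ℝ)‖ ≤ |c| := by
        refine (pi_norm_le_iff_of_nonneg (abs_nonneg c)).2 fun j => ?_
        simp only [Pi.smul_apply, smul_eq_mul, Real.norm_eq_abs]
        rw [Pi.single_apply]
        split
        · simp
        · simp [abs_nonneg]
    _ < ε := hc

theorem part1 (d : ℕ) (P Q : PartialOrder (Fin d)) :
    interior (OmegaPoly (chainPolytope P.le) (chainPolytope Q.le)) ∩
        {x : Fin (d + 1) → ℝ | IsLatticePoint x} = {0} := by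
  classical
  set Ω := OmegaPoly (chainPolytope P.le) (chainPolytope Q.le) with hΩdef
  have hconv : Convex ℝ Ω := convex_convexHull ℝ _
  have hgenP : ∀ x ∈ chainPolytope P.le, (Fin.snoc x 1 : Fin (d+1) → ℝ) ∈ Ω := fun x hx =>
    subset_convexHull ℝ _ (Or.inl ⟨x, hx, rfl⟩)
  have hgenQ : ∀ x ∈ chainPolytope Q.le, (Fin.snoc (-x) (-1) : Fin (d+1) → ℝ) ∈ Ω := fun x hx =>
    subset_convexHull ℝ _ (Or.inr ⟨x, hx, rfl⟩)
  have hbox : ∀ y ∈ Ω, ∀ i, |y i| ≤ 1 := by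
    have hsub : Ω ⊆ {y : Fin (d+1) → ℝ | ∀ i, |y i| ≤ 1} := by
      apply convexHull_min
      · rintro y (⟨x, hx, rfl⟩ | ⟨x, hx, rfl⟩) <;>
          simp only [Set.mem_setOf_eq] <;> intro i <;>
          refine Fin.lastCases ?_ (fun j => ?_) i
        · rw [Fin.snoc_last]; norm_num
        · rw [Fin.snoc_castSucc]
          rw [abs_le]
          exact ⟨by linarith [hx.1 j], coord_le_one hx j⟩
        · rw [Fin.snoc_last]; norm_num
        · rw [Fin.snoc_castSucc, Pi.neg_apply, abs_neg, abs_le]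
          exact ⟨by linarith [hx.1 j], coord_le_one hx j⟩
      · intro p hp q hq α β hα hβ hαβ i
        simp only [Set.mem_setOf_eq] at hp hq
        simp only [Pi.add_apply, Pi.smul_apply, smul_eq_mul]
        calc |α * p i + β * q i| ≤ |α * p i| + |β * q i| := abs_add_le _ _
          _ = α * |p i| + β * |q i| := by
              rw [abs_mul, abs_mul, abs_of_nonneg hα, abs_of_nonneg hβ]
          _ ≤ α * 1 + β * 1 := by
              have := mul_le_mul_of_nonneg_left (hp i) hα
              have := mul_le_mul_of_nonneg_left (hq i) hβ
              linarith
          _ = 1 := by linarith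
    exact fun y hy => hsub hy
  set hv : Fin (d+1) → (Fin (d+1) → ℝ) := fun i j => if j = i then (1/2 : ℝ) else 0 with hhv
  have hP0 : (0 : Fin d → ℝ) ∈ chainPolytope P.le := zero_mem_chainPolytope P
  have hQ0 : (0 : Fin d → ℝ) ∈ chainPolytope Q.le := zero_mem_chainPolytope Q
  have hsnocQ0 : (Fin.snoc (0 : Fin d → ℝ) (-1) : Fin (d+1) → ℝ) ∈ Ω := by
    have := hgenQ 0 hQ0
    rwa [neg_zero] at this
  have hsnocP0 : (Fin.snoc (0 : Fin d → ℝ) (1:ℝ) : Fin (d+1) → ℝ) ∈ Ω := hgenP 0 hP0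
  have hhvmem : ∀ i, hv i ∈ Ω ∧ -hv i ∈ Ω := by
    intro i
    refine Fin.lastCases ?_ (fun k => ?_) i
    · constructor
      · have hcomb := hconv hsnocP0 hsnocQ0
          (by norm_num : (0:ℝ) ≤ 3/4) (by norm_num : (0:ℝ) ≤ 1/4) (by norm_num)
        have heq : (3/4 : ℝ) • (Fin.snoc (0 : Fin d → ℝ) (1:ℝ) : Fin (d+1) → ℝ)
            + (1/4 : ℝ) • (Fin.snoc (0 : Fin d → ℝ) (-1:ℝ) : Fin (d+1) → ℝ)
            = hv (Fin.last d) := by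
          funext j
          refine Fin.lastCases ?_ (fun m => ?_) j
          · simp [hhv, Fin.snoc_last]; norm_num
          · simp [hhv, Fin.snoc_castSucc, (Fin.castSucc_lt_last m).ne]
        rwa [heq] at hcomb
      · have hcomb := hconv hsnocP0 hsnocQ0
          (by norm_num : (0:ℝ) ≤ 1/4) (by norm_num : (0:ℝ) ≤ 3/4) (by norm_num)
        have heq : (1/4 : ℝ) • (Fin.snoc (0 : Fin d → ℝ) (1:ℝ) : Fin (d+1) → ℝ)
            + (3/4 : ℝ) • (Fin.snoc (0 : Fin d → ℝ) (-1:ℝ) : Fin (d+1) → ℝ)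
            = -hv (Fin.last d) := by
          funext j
          refine Fin.lastCases ?_ (fun m => ?_) j
          · simp only [hhv, Pi.add_apply, Pi.smul_apply, Fin.snoc_last, smul_eq_mul,
              Pi.neg_apply]
            norm_num
          · simp [hhv, Fin.snoc_castSucc, (Fin.castSucc_lt_last m).ne]
        rwa [heq] at hcomb
    · have hiP : ind {k} ∈ chainPolytope P.le := ind_mem_chainPolytope (singleton_AC k)
      have hiQ : ind {k} ∈ chainPolytope Q.le := ind_mem_chainPolytope (singleton_AC k)
      constructor
      · have hcomb := hconv (hgenP _ hiP) hsnocQ0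
          (by norm_num : (0:ℝ) ≤ 1/2) (by norm_num : (0:ℝ) ≤ 1/2) (by norm_num)
        have heq : (1/2 : ℝ) • (Fin.snoc (ind {k}) (1:ℝ) : Fin (d+1) → ℝ)
            + (1/2 : ℝ) • (Fin.snoc (0 : Fin d → ℝ) (-1:ℝ) : Fin (d+1) → ℝ)
            = hv (Fin.castSucc k) := by
          funext j
          refine Fin.lastCases ?_ (fun m => ?_) j
          · simp [hhv, Fin.snoc_last, (Fin.castSucc_lt_last k).ne']
          · simp only [hhv, Pi.add_apply, Pi.smul_apply, Fin.snoc_castSucc, smul_eq_mul,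
              Pi.zero_apply, mul_zero, add_zero, ind]
            by_cases hmk : m = k
            · simp [hmk]
            · simp [hmk, Fin.castSucc_inj, ind]
        rwa [heq] at hcomb
      · have hcomb := hconv hsnocP0 (hgenQ _ hiQ)
          (by norm_num : (0:ℝ) ≤ 1/2) (by norm_num : (0:ℝ) ≤ 1/2) (by norm_num)
        have heq : (1/2 : ℝ) • (Fin.snoc (0 : Fin d → ℝ) (1:ℝ) : Fin (d+1) → ℝ)
            + (1/2 : ℝ) • (Fin.snoc (-(ind {k})) (-1:ℝ) : Fin (d+1) → ℝ)
            = -hv (Fin.castSucc k) := by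
          funext j
          refine Fin.lastCases ?_ (fun m => ?_) j
          · simp only [hhv, Pi.add_apply, Pi.smul_apply, Fin.snoc_last, smul_eq_mul,
              Pi.neg_apply, if_neg (Fin.castSucc_lt_last k).ne']
            norm_num
          · simp only [hhv, Pi.add_apply, Pi.smul_apply, Fin.snoc_castSucc, smul_eq_mul,
              Pi.zero_apply, mul_zero, zero_add, Pi.neg_apply, ind]
            by_cases hmk : m = k
            · simp [hmk]
            · simp [hmk, Fin.castSucc_inj]
        rwa [heq] at hcomb
  have h0mem : (0 : Fin (d+1) → ℝ) ∈ Ω := by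
    have hcomb := hconv hsnocP0 hsnocQ0
      (by norm_num : (0:ℝ) ≤ 1/2) (by norm_num : (0:ℝ) ≤ 1/2) (by norm_num)
    have heq : (1/2 : ℝ) • (Fin.snoc (0 : Fin d → ℝ) (1:ℝ) : Fin (d+1) → ℝ)
        + (1/2 : ℝ) • (Fin.snoc (0 : Fin d → ℝ) (-1:ℝ) : Fin (d+1) → ℝ)
        = (0 : Fin (d+1) → ℝ) := by
      funext j
      refine Fin.lastCases ?_ (fun m => ?_) j
      · simp [Fin.snoc_last]
      · simp [Fin.snoc_castSucc]
    rwa [heq] at hcomb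
  have h0int : (0 : Fin (d+1) → ℝ) ∈ interior Ω := by
    rw [mem_interior_iff_mem_nhds, Metric.mem_nhds_iff]
    refine ⟨1 / (2 * (d+1)), by positivity, ?_⟩
    intro y hy
    rw [Metric.mem_ball, dist_zero_right] at hy
    have hyc : ∀ i, |y i| < 1 / (2 * (d+1)) := by
      intro i
      calc |y i| = ‖y i‖ := (Real.norm_eq_abs _).symm
        _ ≤ ‖y‖ := norm_le_pi_norm y i
        _ < _ := hy
    have hsum_le : ∑ i : Fin (d+1), 2 * |y i| ≤ 1 := by
      have hb : ∀ i : Fin (d+1), 2 * |y i| ≤ 2 * (1 / (2 * (d+1))) := by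
        intro i
        have := le_of_lt (hyc i)
        linarith
      calc ∑ i : Fin (d+1), 2 * |y i|
          ≤ ∑ _i : Fin (d+1), 2 * (1 / (2 * ((d:ℝ)+1))) :=
            Finset.sum_le_sum fun i _ => by push_cast at hb ⊢; exact hb i
        _ = ((d:ℝ)+1) * (2 * (1 / (2 * ((d:ℝ)+1)))) := by
            rw [Finset.sum_const, card_univ, Fintype.card_fin, nsmul_eq_mul]
            push_cast
            ring
        _ = 1 := by
            have hdne : ((d:ℝ)+1) ≠ 0 := by positivity
            field_simp
    set wt : Option (Fin (d+1)) → ℝ := fun o =>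
      Option.rec (1 - ∑ i : Fin (d+1), 2 * |y i|) (fun i => 2 * |y i|) o with hwt
    set pt : Option (Fin (d+1)) → (Fin (d+1) → ℝ) := fun o =>
      Option.rec 0 (fun i => if 0 ≤ y i then hv i else -hv i) o with hpt
    have hw0 : ∀ o ∈ (univ : Finset (Option (Fin (d+1)))), 0 ≤ wt o := by
      rintro (_ | i) _
      · simp only [hwt]
        linarith
      · simp only [hwt]
        positivity
    have hw1 : ∑ o ∈ (univ : Finset (Option (Fin (d+1)))), wt o = 1 := by
      rw [Fintype.sum_option]
      simp only [hwt]
      ring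
    have hpmem : ∀ o ∈ (univ : Finset (Option (Fin (d+1)))), pt o ∈ Ω := by
      rintro (_ | i) _
      · exact h0mem
      · simp only [hpt]
        split
        · exact (hhvmem i).1
        · exact (hhvmem i).2
    have hcomb := hconv.sum_mem hw0 hw1 hpmem
    have hfinal : ∑ o ∈ (univ : Finset (Option (Fin (d+1)))), wt o • pt o = y := by
      rw [Fintype.sum_option]
      simp only [hwt, hpt, smul_zero, zero_add]
      funext j
      rw [Finset.sum_apply]
      have hterm : ∀ i, ((2 * |y i|) • (if 0 ≤ y i then hv i else -hv i)) j
          = if j = i then y i else 0 := by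
        intro i
        by_cases h : 0 ≤ y i
        · rw [if_pos h]
          simp only [Pi.smul_apply, smul_eq_mul, hhv]
          by_cases hji : j = i
          · rw [if_pos hji, if_pos hji, abs_of_nonneg h]; ring
          · rw [if_neg hji, if_neg hji, mul_zero]
        · rw [if_neg h]
          simp only [Pi.smul_apply, Pi.neg_apply, smul_eq_mul, hhv]
          push_neg at h
          by_cases hji : j = i
          · rw [if_pos hji, if_pos hji, abs_of_neg h]; ring
          · rw [if_neg hji, if_neg hji, neg_zero, mul_zero]
      calc ∑ i : Fin (d+1), ((2 * |y i|) • (if 0 ≤ y i then hv i else -hv i)) j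
          = ∑ i : Fin (d+1), if j = i then y i else 0 :=
            Finset.sum_congr rfl fun i _ => hterm i
        _ = y j := by rw [Finset.sum_ite_eq univ j (fun i => y i), if_pos (mem_univ j)]
    rw [hfinal] at hcomb
    exact hcomb
  ext z
  simp only [Set.mem_inter_iff, Set.mem_setOf_eq, Set.mem_singleton_iff]
  constructor
  · rintro ⟨hzint, hzlat⟩
    obtain ⟨ε, hε, hpert⟩ := interior_perturb hzint
    funext i
    obtain ⟨m, hm⟩ := hzlat i
    have hmem1 := hbox _ (hpert i (ε/2) (by rw [abs_of_pos (by linarith)]; linarith)) i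
    have hmem2 := hbox _ (hpert i (-(ε/2)) (by rw [abs_neg, abs_of_pos (by linarith)]; linarith)) i
    simp only [Pi.add_apply, Pi.smul_apply, Pi.single_eq_same, smul_eq_mul, mul_one] at hmem1 hmem2
    have h3 : |z i| < 1 := by
      rw [abs_le] at hmem1 hmem2
      rw [abs_lt]
      constructor <;> linarith
    rw [hm] at h3
    have h4 : |m| < 1 := by
      have h6 : ((|m| : ℤ) : ℝ) < 1 := by rwa [Int.cast_abs]
      exact_mod_cast h6
    have h5 : m = 0 := by
      rw [abs_lt] at h4
      omega
    rw [hm, h5]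
    simp
  · rintro rfl
    exact ⟨h0int, fun i => ⟨0, by simp⟩⟩



/-- For any finite posets `P` and `Q` on `d` elements, `Ω(C_P, C_Q)` is a
Gorenstein Fano (reflexive) polytope: the origin is its unique interior lattice
point and its dual polytope is an integral polytope. -/
theorem Omega_chain_chain_reflexive (d : ℕ) (P Q : PartialOrder (Fin d)) :
    interior (OmegaPoly (chainPolytope P.le) (chainPolytope Q.le)) ∩
        {x : Fin (d + 1) → ℝ | IsLatticePoint x} = {0} ∧
    ∃ V : Finset (Fin (d + 1) → ℝ), (∀ v ∈ V, IsLatticePoint v) ∧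
      dualPoly (OmegaPoly (chainPolytope P.le) (chainPolytope Q.le)) =
        convexHull ℝ (V : Set (Fin (d + 1) → ℝ)) :=
  ⟨part1 d P Q, part2 d P Q⟩
end
end

section
/- For any finite posets P and Q on d elements, Ω(O_P, C_Q) is a Gorenstein Fano (reflexive) polytope of dimension d+1. -/
/-!
`Ω(O_P, C_Q)` is the polytope `{z | z ⬝ᵥ w ≤ 1 for all w ∈ omegaNormals}` for an explicit finite
set of integral vectors. The hard inclusion: for `z = (x, t)` satisfying these inequalities put
`λ = (1 + t) / 2`, `μ = (1 - t) / 2` and `y i = min λ (max 0 (max_{j ≥ i} x j))`; then `y ∈ λ • O_P`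
and `y - x ∈ μ • C_Q`, the chain inequalities being exactly what bounds `y - x` on maximal chains,
so `z = λ (p, 1) + μ (-q, -1)`. An H-description by finitely many vectors `W` makes the origin
interior and, as `0 ∈ conv W`, identifies the dual with `conv W`. Since `W` contains
`±(0, 1)` and `±(2 eᵢ, -1)`, an interior lattice point has integral products with these in
`(-1, 1)`, hence zero, so it is the origin.
-/

open Finset Matrix
open scoped Pointwise

section DualPoly

variable {n : ℕ}

theorem mem_dualPoly {S : Set (Fin n → ℝ)} {x : Fin n → ℝ} :
    x ∈ dualPoly S ↔ ∀ y ∈ S, x ⬝ᵥ y ≤ 1 :=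
  Iff.rfl

theorem convex_dualPoly (S : Set (Fin n → ℝ)) : Convex ℝ (dualPoly S) := by
  intro x hx x' hx' a b ha hb hab y hy
  rw [mem_dualPoly] at hx hx'
  change (a • x + b • x') ⬝ᵥ y ≤ 1
  have := add_le_add (mul_le_mul_of_nonneg_left (hx y hy) ha)
    (mul_le_mul_of_nonneg_left (hx' y hy) hb)
  rw [add_dotProduct, smul_dotProduct, smul_dotProduct, smul_eq_mul, smul_eq_mul]
  linarith

theorem subset_dualPoly_dualPoly (S : Set (Fin n → ℝ)) : S ⊆ dualPoly (dualPoly S) :=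
  fun y hy => mem_dualPoly.2 fun x hx => by
    rw [dotProduct_comm]
    exact hx y hy

theorem dualPoly_dualPoly_of_finite {W : Set (Fin n → ℝ)} (hW : W.Finite)
    (h0 : (0 : Fin n → ℝ) ∈ convexHull ℝ W) : dualPoly (dualPoly W) = convexHull ℝ W := by
  refine subset_antisymm (fun a ha => ?_)
    (convexHull_min (subset_dualPoly_dualPoly W) (convex_dualPoly _))
  by_contra ha'
  -- a functional separating `a` from `conv W` is below `u` on `conv W ∋ 0`, so `u > 0`
  -- and the functional divided by `u` is a point of `dualPoly W`
  obtain ⟨f, u, hf, hfa⟩ := geometric_hahn_banach_closed_point (convex_convexHull ℝ W)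
    (hW.isCompact_convexHull (𝕜 := ℝ)).isClosed ha'
  have hu : 0 < u := by simpa using hf 0 h0
  set v := (dotProductEquiv ℝ (Fin n)).symm f.toLinearMap
  have hv : ∀ y, v ⬝ᵥ y = f y := fun y => by
    rw [← dotProductEquiv_apply_apply, LinearEquiv.apply_symm_apply]
    rfl
  have hvW : u⁻¹ • v ∈ dualPoly W := mem_dualPoly.2 fun w hw => by
    rw [smul_dotProduct, hv, smul_eq_mul, inv_mul_le_one₀ hu]
    exact (hf w (subset_convexHull ℝ W hw)).le
  have := mem_dualPoly.1 ha _ hvW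
  rw [dotProduct_comm, smul_dotProduct, hv, smul_eq_mul, inv_mul_le_one₀ hu] at this
  linarith

theorem zero_mem_interior_dualPoly {W : Set (Fin n → ℝ)} (hW : W.Finite) :
    (0 : Fin n → ℝ) ∈ interior (dualPoly W) := by
  refine mem_interior.2 ⟨⋂ w ∈ W, {x | x ⬝ᵥ w < 1}, fun x hx w hw => ?_,
    hW.isOpen_biInter fun w _ => isOpen_lt (continuous_id.dotProduct continuous_const)
      continuous_const, by simp⟩
  exact (Set.mem_iInter₂.1 hx w hw).le

theorem dotProduct_lt_one_of_mem_interior_dualPoly {W : Set (Fin n → ℝ)} {w z : Fin n → ℝ}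
    (hw : w ∈ W) (hw0 : w ≠ 0) (hz : z ∈ interior (dualPoly W)) : z ⬝ᵥ w < 1 := by
  set f : (Fin n → ℝ) →ₗ[ℝ] ℝ := dotProductEquiv ℝ (Fin n) w
  have hf : Function.Surjective f :=
    LinearMap.surjective_of_ne_zero ((LinearEquiv.map_ne_zero_iff _).2 hw0)
  have hsub : f '' interior (dualPoly W) ⊆ Set.Iic 1 := by
    rintro _ ⟨y, hy, rfl⟩
    have := mem_dualPoly.1 (interior_subset hy) w hw
    rwa [dotProduct_comm] at this
  have := interior_maximal hsub (f.isOpenMap_of_finiteDimensional hf _ isOpen_interior)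
    ⟨z, hz, rfl⟩
  rw [interior_Iic] at this
  simpa [f, dotProduct_comm] using this

end DualPoly

theorem Fin.snoc_dotProduct_snoc {n : ℕ} {α : Type*} [Mul α] [AddCommMonoid α]
    (x y : Fin n → α) (a b : α) :
    (Fin.snoc x a : Fin (n + 1) → α) ⬝ᵥ Fin.snoc y b = x ⬝ᵥ y + a * b := by
  simp [dotProduct, Fin.sum_univ_castSucc]

section Lattice

variable {n : ℕ}

def latticePoints (n : ℕ) : AddSubgroup (Fin n → ℝ) where
  carrier := {x | IsLatticePoint x}
  add_mem' {x y} hx hy i := by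
    obtain ⟨a, ha⟩ := hx i
    obtain ⟨b, hb⟩ := hy i
    exact ⟨a + b, by simp [ha, hb]⟩
  zero_mem' _ := ⟨0, by simp⟩
  neg_mem' {x} hx i := by
    obtain ⟨a, ha⟩ := hx i
    exact ⟨-a, by simp [ha]⟩

theorem single_mem_latticePoints (i : Fin n) (m : ℤ) :
    Pi.single i (m : ℝ) ∈ latticePoints n := fun k => by
  by_cases h : k = i
  · subst h
    exact ⟨m, by simp⟩
  · exact ⟨0, by simp [h]⟩

theorem snoc_mem_latticePoints {x : Fin n → ℝ} (hx : x ∈ latticePoints n) (m : ℤ) :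
    (Fin.snoc x (m : ℝ) : Fin (n + 1) → ℝ) ∈ latticePoints (n + 1) := fun k => by
  induction k using Fin.lastCases with
  | last => exact ⟨m, by simp⟩
  | cast i => simpa using hx i

theorem IsLatticePoint.exists_dotProduct_eq {x y : Fin n → ℝ} (hx : IsLatticePoint x)
    (hy : IsLatticePoint y) : ∃ k : ℤ, x ⬝ᵥ y = k := by
  choose a ha using hx
  choose b hb using hy
  exact ⟨∑ i, a i * b i, by simp [dotProduct, ha, hb]⟩

theorem dotProduct_eq_zero_of_mem_interior_dualPoly {W : Set (Fin n → ℝ)} {w z : Fin n → ℝ}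
    (hw : w ∈ W) (hw' : -w ∈ W) (hwL : IsLatticePoint w)
    (hz : z ∈ interior (dualPoly W)) (hzL : IsLatticePoint z) : z ⬝ᵥ w = 0 := by
  rcases eq_or_ne w 0 with rfl | hw0
  · simp
  obtain ⟨k, hk⟩ := hzL.exists_dotProduct_eq hwL
  have h1 := dotProduct_lt_one_of_mem_interior_dualPoly hw hw0 hz
  have h2 := dotProduct_lt_one_of_mem_interior_dualPoly hw' (neg_ne_zero.2 hw0) hz
  rw [dotProduct_neg, hk] at h2
  rw [hk] at h1 ⊢
  norm_cast at h1 h2 ⊢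
  omega

end Lattice

section OrderChain

variable {d : ℕ} {r s : Fin d → Fin d → Prop}

theorem exists_isMaxChain_mem (s : Fin d → Fin d → Prop) (i : Fin d) :
    ∃ c : Finset (Fin d), IsMaxChain s (c : Set (Fin d)) ∧ i ∈ c := by
  obtain ⟨M, hM, hiM⟩ := (IsChain.singleton : IsChain s {i}).exists_maxChain
  exact ⟨(Set.toFinite M).toFinset, by simpa using hM, by simpa using hiM rfl⟩

theorem le_of_forall_isMaxChain_sum_le {u : Fin d → ℝ} {b : ℝ} (h0 : ∀ i, 0 ≤ u i)
    (hsum : ∀ c : Finset (Fin d), IsMaxChain s (c : Set (Fin d)) → ∑ i ∈ c, u i ≤ b)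
    (i : Fin d) : u i ≤ b := by
  obtain ⟨c, hc, hi⟩ := exists_isMaxChain_mem s i
  exact (single_le_sum (fun k _ => h0 k) hi).trans (hsum c hc)

theorem mem_smul_orderPolytope {a : ℝ} (ha : 0 ≤ a) {y : Fin d → ℝ} (h0 : ∀ i, 0 ≤ y i)
    (ha' : ∀ i, y i ≤ a) (hr : ∀ i j, r i j → y j ≤ y i) : y ∈ a • orderPolytope r := by
  rcases ha.eq_or_lt with rfl | ha
  · refine ⟨0, ⟨fun _ => by simp, fun _ _ _ => le_rfl⟩, ?_⟩
    ext i
    simpa using (le_antisymm (ha' i) (h0 i)).symm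
  · refine ⟨a⁻¹ • y, ⟨fun i => ⟨?_, ?_⟩, fun i j h => ?_⟩, smul_inv_smul₀ ha.ne' y⟩
    · exact mul_nonneg (inv_nonneg.2 ha.le) (h0 i)
    · exact (inv_mul_le_one₀ ha).2 (ha' i)
    · exact mul_le_mul_of_nonneg_left (hr i j h) (inv_nonneg.2 ha.le)

theorem mem_smul_chainPolytope {b : ℝ} (hb : 0 ≤ b) {u : Fin d → ℝ} (h0 : ∀ i, 0 ≤ u i)
    (hsum : ∀ c : Finset (Fin d), IsMaxChain s (c : Set (Fin d)) → ∑ i ∈ c, u i ≤ b) :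
    u ∈ b • chainPolytope s := by
  rcases hb.eq_or_lt with rfl | hb
  · refine ⟨0, ⟨fun _ => le_rfl, fun _ _ => by simp⟩, ?_⟩
    ext i
    simpa using (le_antisymm (le_of_forall_isMaxChain_sum_le h0 hsum i) (h0 i)).symm
  · refine ⟨b⁻¹ • u, ⟨fun i => mul_nonneg (inv_nonneg.2 hb.le) (h0 i), fun c hc => ?_⟩,
      smul_inv_smul₀ hb.ne' u⟩
    simpa [← mul_sum, inv_mul_le_one₀ hb] using hsum c hc

theorem mem_smul_orderPolytope_sub_smul_chainPolytope {P : Preorder (Fin d)} {x : Fin d → ℝ}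
    {a b : ℝ} (ha : 0 ≤ a) (hb : 0 ≤ b) (hxa : ∀ i, x i ≤ a)
    (hchain : ∀ (c S : Finset (Fin d)) (j : Fin d → Fin d), IsMaxChain s (c : Set (Fin d)) →
      S ⊆ c → (∀ i ∈ S, P.le i (j i)) → ∑ i ∈ S, x (j i) - ∑ k ∈ c, x k ≤ b) :
    x ∈ a • orderPolytope P.le - b • chainPolytope s := by
  classical
  have hmax : ∀ i, ∃ j, P.le i j ∧ ∀ k, P.le i k → x k ≤ x j := fun i => by
    obtain ⟨j, hj, hmax⟩ := (univ.filter (P.le i)).exists_max_image x ⟨i, by simp⟩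
    exact ⟨j, (mem_filter.1 hj).2, fun k hk => hmax k (by simp [hk])⟩
  choose peak le_peak le_x_peak using hmax
  have hanti : ∀ i k, P.le i k → x (peak k) ≤ x (peak i) :=
    fun i k h => le_x_peak i _ (P.le_trans _ _ _ h (le_peak k))
  set y : Fin d → ℝ := fun i => min a (max 0 (x (peak i)))
  have hxy : ∀ i, x i ≤ y i :=
    fun i => le_min (hxa i) ((le_x_peak i i (P.le_refl i)).trans (le_max_right _ _))
  refine ⟨y, mem_smul_orderPolytope ha (fun i => le_min ha (le_max_left _ _))
      (fun i => min_le_left _ _) (fun i k h => min_le_min_left _ (max_le_max_left _ (hanti i k h))),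
    y - x, mem_smul_chainPolytope hb (fun i => sub_nonneg.2 (hxy i)) (fun c hc => ?_),
    sub_sub_cancel y x⟩
  have hy : ∀ i, y i ≤ if 0 < x (peak i) then x (peak i) else 0 := fun i => by
    split_ifs with h
    · exact (min_le_right _ _).trans (max_le h.le le_rfl)
    · exact (min_le_right _ _).trans (max_le le_rfl (not_lt.1 h))
  calc ∑ i ∈ c, (y - x) i ≤ ∑ i ∈ c, ((if 0 < x (peak i) then x (peak i) else 0) - x i) :=
        sum_le_sum fun i _ => sub_le_sub_right (hy i) _
    _ = ∑ i ∈ c.filter (fun i => 0 < x (peak i)), x (peak i) - ∑ i ∈ c, x i := by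
        rw [sum_sub_distrib, sum_filter]
    _ ≤ b := hchain c _ peak hc (filter_subset _ _) fun i _ => le_peak i

end OrderChain

section Omega

variable {d : ℕ} {r s : Fin d → Fin d → Prop}

theorem snoc_mem_OmegaPoly {A B : Set (Fin d → ℝ)} {a b : ℝ} (ha : 0 ≤ a) (hb : 0 ≤ b)
    (hab : a + b = 1) {x : Fin d → ℝ} (hx : x ∈ a • A - b • B) :
    (Fin.snoc x (a - b) : Fin (d + 1) → ℝ) ∈ OmegaPoly A B := by
  obtain ⟨_, ⟨p, hp, rfl⟩, _, ⟨q, hq, rfl⟩, rfl⟩ := hx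
  have : (Fin.snoc (a • p - b • q) (a - b) : Fin (d + 1) → ℝ) =
      a • Fin.snoc p 1 + b • Fin.snoc (-q) (-1) := by
    ext k
    induction k using Fin.lastCases <;> simp [sub_eq_add_neg]
  rw [this, OmegaPoly]
  refine convex_convexHull ℝ _ (subset_convexHull ℝ _ ?_) (subset_convexHull ℝ _ ?_) ha hb hab
  exacts [Or.inl ⟨p, hp, rfl⟩, Or.inr ⟨q, hq, rfl⟩]

def boxNormals (d : ℕ) : Set (Fin (d + 1) → ℝ) :=
  insert (Fin.snoc 0 1) (Set.range fun i => Fin.snoc (Pi.single i 2) (-1))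

def chainNormal (c S : Finset (Fin d)) (j : Fin d → Fin d) : Fin (d + 1) → ℝ :=
  Fin.snoc (2 • (∑ i ∈ S, Pi.single (j i) 1 - ∑ k ∈ c, Pi.single k 1)) 1

/-- Writing `z = (x, t)`, the inequalities `z ⬝ᵥ w ≤ 1` for these `w` read `|t| ≤ 1`,
`|2 x i - t| ≤ 1`, and `2 (∑ i ∈ S, x (j i) - ∑ k ∈ c, x k) + t ≤ 1` for every maximal
`s`-chain `c`, every `S ⊆ c` and every `j` with `r i (j i)` on `S`. -/
def omegaNormals (r s : Fin d → Fin d → Prop) : Set (Fin (d + 1) → ℝ) :=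
  boxNormals d ∪ -boxNormals d ∪ {w | ∃ (c S : Finset (Fin d)) (j : Fin d → Fin d),
    IsMaxChain s (c : Set (Fin d)) ∧ S ⊆ c ∧ (∀ i ∈ S, r i (j i)) ∧ chainNormal c S j = w}

theorem snoc_dotProduct_chainNormal (x : Fin d → ℝ) (t : ℝ) (c S : Finset (Fin d))
    (j : Fin d → Fin d) :
    (Fin.snoc x t : Fin (d + 1) → ℝ) ⬝ᵥ chainNormal c S j =
      2 * (∑ i ∈ S, x (j i) - ∑ k ∈ c, x k) + t := by
  rw [chainNormal, Fin.snoc_dotProduct_snoc, dotProduct_smul, dotProduct_sub, dotProduct_sum,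
    dotProduct_sum]
  simp [dotProduct_single]

theorem omegaNormals_finite : (omegaNormals r s).Finite := by
  have hB : (boxNormals d).Finite := (Set.finite_range _).insert _
  refine (hB.union hB.neg).union ((Set.finite_range fun t : Finset (Fin d) × Finset (Fin d) ×
    (Fin d → Fin d) => chainNormal t.1 t.2.1 t.2.2).subset ?_)
  rintro _ ⟨c, S, j, -, -, -, rfl⟩
  exact ⟨(c, S, j), rfl⟩

theorem boxNormals_subset_latticePoints : boxNormals d ⊆ latticePoints (d + 1) := by
  rintro _ (rfl | ⟨i, rfl⟩)
  · exact_mod_cast snoc_mem_latticePoints (zero_mem _) 1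
  · exact_mod_cast snoc_mem_latticePoints (single_mem_latticePoints i 2) (-1)

theorem omegaNormals_subset_latticePoints : omegaNormals r s ⊆ latticePoints (d + 1) := by
  rintro w ((hw | hw) | ⟨c, S, j, -, -, -, rfl⟩)
  · exact boxNormals_subset_latticePoints hw
  · simpa using neg_mem (boxNormals_subset_latticePoints hw)
  · have h1 : ∀ k, Pi.single k (1 : ℝ) ∈ latticePoints d := fun k => by
      exact_mod_cast single_mem_latticePoints k 1
    exact_mod_cast snoc_mem_latticePoints (nsmul_mem (sub_mem (sum_mem fun i _ => h1 (j i))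
      (sum_mem fun k _ => h1 k)) 2) 1

theorem boxNormals_subset_omegaNormals : boxNormals d ⊆ omegaNormals r s :=
  fun _ hw => Or.inl (Or.inl hw)

theorem neg_mem_omegaNormals {w : Fin (d + 1) → ℝ} (hw : w ∈ boxNormals d) :
    -w ∈ omegaNormals r s :=
  Or.inl (Or.inr (Set.neg_mem_neg.2 hw))

theorem zero_mem_convexHull_omegaNormals :
    (0 : Fin (d + 1) → ℝ) ∈ convexHull ℝ (omegaNormals r s) := by
  have hw : Fin.snoc 0 1 ∈ boxNormals d := Set.mem_insert _ _
  have := convex_convexHull ℝ (omegaNormals r s)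
    (subset_convexHull ℝ _ (boxNormals_subset_omegaNormals hw))
    (subset_convexHull ℝ _ (neg_mem_omegaNormals hw)) (by norm_num : (0 : ℝ) ≤ 1 / 2)
    (by norm_num : (0 : ℝ) ≤ 1 / 2) (by norm_num)
  simpa using this

theorem abs_snoc_dotProduct_le_one {y : Fin d → ℝ} (hy : ∀ i, 0 ≤ y i ∧ y i ≤ 1)
    {w : Fin (d + 1) → ℝ} (hw : w ∈ boxNormals d) :
    |(Fin.snoc y 1 : Fin (d + 1) → ℝ) ⬝ᵥ w| ≤ 1 := by
  rcases hw with rfl | ⟨i, rfl⟩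
  · simp [Fin.snoc_dotProduct_snoc]
  · rw [Fin.snoc_dotProduct_snoc, dotProduct_single, abs_le]
    constructor <;> linarith [hy i]

theorem dotProduct_le_one_of_forall_abs_le {z : Fin (d + 1) → ℝ}
    (hz : ∀ w ∈ boxNormals d, |z ⬝ᵥ w| ≤ 1) {w : Fin (d + 1) → ℝ}
    (hw : w ∈ boxNormals d ∪ -boxNormals d) : z ⬝ᵥ w ≤ 1 := by
  rcases hw with hw | hw
  · exact (le_abs_self _).trans (hz w hw)
  · simpa [dotProduct_neg] using (neg_le_abs _).trans (hz _ hw)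

theorem snoc_dotProduct_le_one_of_mem_orderPolytope {p : Fin d → ℝ}
    (hp : p ∈ orderPolytope r) {w : Fin (d + 1) → ℝ} (hw : w ∈ omegaNormals r s) :
    (Fin.snoc p 1 : Fin (d + 1) → ℝ) ⬝ᵥ w ≤ 1 := by
  rcases hw with hw | ⟨c, S, j, -, hS, hj, rfl⟩
  · exact dotProduct_le_one_of_forall_abs_le (fun w hw => abs_snoc_dotProduct_le_one hp.1 hw) hw
  · have h1 : ∑ i ∈ S, p (j i) ≤ ∑ i ∈ S, p i := sum_le_sum fun i hi => hp.2 i (j i) (hj i hi)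
    have h2 : ∑ i ∈ S, p i ≤ ∑ k ∈ c, p k :=
      sum_le_sum_of_subset_of_nonneg hS fun i _ _ => (hp.1 i).1
    rw [snoc_dotProduct_chainNormal]
    linarith

theorem snoc_neg_dotProduct_le_one_of_mem_chainPolytope {q : Fin d → ℝ}
    (hq : q ∈ chainPolytope s) {w : Fin (d + 1) → ℝ} (hw : w ∈ omegaNormals r s) :
    (Fin.snoc (-q) (-1) : Fin (d + 1) → ℝ) ⬝ᵥ w ≤ 1 := by
  rcases hw with hw | ⟨c, S, j, hc, -, -, rfl⟩
  · have hneg : (Fin.snoc (-q) (-1) : Fin (d + 1) → ℝ) = -Fin.snoc q 1 := by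
      ext k
      induction k using Fin.lastCases <;> simp
    have hq01 i : 0 ≤ q i ∧ q i ≤ 1 := ⟨hq.1 i, le_of_forall_isMaxChain_sum_le hq.1 hq.2 i⟩
    refine dotProduct_le_one_of_forall_abs_le (fun w hw => ?_) hw
    rw [hneg, neg_dotProduct, abs_neg]
    exact abs_snoc_dotProduct_le_one hq01 hw
  · have h1 : 0 ≤ ∑ i ∈ S, q (j i) := sum_nonneg fun i _ => hq.1 (j i)
    have h2 := hq.2 c hc
    rw [snoc_dotProduct_chainNormal]
    simp only [Pi.neg_apply, sum_neg_distrib]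
    linarith

theorem OmegaPoly_subset_dualPoly_omegaNormals :
    OmegaPoly (orderPolytope r) (chainPolytope s) ⊆ dualPoly (omegaNormals r s) := by
  refine convexHull_min ?_ (convex_dualPoly _)
  rintro _ (⟨p, hp, rfl⟩ | ⟨q, hq, rfl⟩) w hw
  · exact snoc_dotProduct_le_one_of_mem_orderPolytope hp hw
  · exact snoc_neg_dotProduct_le_one_of_mem_chainPolytope hq hw

theorem dualPoly_omegaNormals_subset_OmegaPoly (P : Preorder (Fin d)) :
    dualPoly (omegaNormals P.le s) ⊆ OmegaPoly (orderPolytope P.le) (chainPolytope s) := by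
  intro z hz
  obtain ⟨x, t, rfl⟩ : ∃ x t, z = Fin.snoc x t := ⟨_, _, (Fin.snoc_init_self z).symm⟩
  rw [mem_dualPoly] at hz
  have hbox : ∀ w ∈ boxNormals d, |(Fin.snoc x t : Fin (d + 1) → ℝ) ⬝ᵥ w| ≤ 1 := fun w hw =>
    abs_le.2 ⟨neg_le.1 (by simpa using hz _ (neg_mem_omegaNormals hw)),
      hz w (boxNormals_subset_omegaNormals hw)⟩
  have ht : |t| ≤ 1 := by simpa [Fin.snoc_dotProduct_snoc] using hbox _ (Set.mem_insert _ _)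
  have hx i : x i ≤ (1 + t) / 2 := by
    have := (abs_le.1 (hbox _ (Or.inr ⟨i, rfl⟩))).2
    rw [Fin.snoc_dotProduct_snoc, dotProduct_single] at this
    linarith
  have hchain (c S : Finset (Fin d)) (j : Fin d → Fin d) (hc : IsMaxChain s (c : Set (Fin d)))
      (hS : S ⊆ c) (hj : ∀ i ∈ S, P.le i (j i)) :
      ∑ i ∈ S, x (j i) - ∑ k ∈ c, x k ≤ (1 - t) / 2 := by
    have := hz _ (Or.inr ⟨c, S, j, hc, hS, hj, rfl⟩)
    rw [snoc_dotProduct_chainNormal] at this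
    linarith
  obtain ⟨ht₁, ht₂⟩ := abs_le.1 ht
  have := snoc_mem_OmegaPoly (by linarith) (by linarith) (by ring)
    (mem_smul_orderPolytope_sub_smul_chainPolytope (by linarith) (by linarith) hx hchain)
  rwa [show (1 + t) / 2 - (1 - t) / 2 = t by ring] at this

theorem OmegaPoly_eq_dualPoly_omegaNormals (P : Preorder (Fin d)) :
    OmegaPoly (orderPolytope P.le) (chainPolytope s) = dualPoly (omegaNormals P.le s) :=
  OmegaPoly_subset_dualPoly_omegaNormals.antisymm (dualPoly_omegaNormals_subset_OmegaPoly P)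

theorem eq_zero_of_mem_interior_dualPoly_omegaNormals {z : Fin (d + 1) → ℝ}
    (hz : z ∈ interior (dualPoly (omegaNormals r s))) (hzL : IsLatticePoint z) : z = 0 := by
  have hbox : ∀ w ∈ boxNormals d, z ⬝ᵥ w = 0 := fun w hw =>
    dotProduct_eq_zero_of_mem_interior_dualPoly (boxNormals_subset_omegaNormals hw)
      (neg_mem_omegaNormals hw) (boxNormals_subset_latticePoints hw) hz hzL
  obtain ⟨x, t, rfl⟩ : ∃ x t, z = Fin.snoc x t := ⟨_, _, (Fin.snoc_init_self z).symm⟩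
  have ht : t = 0 := by
    simpa [Fin.snoc_dotProduct_snoc] using hbox _ (Set.mem_insert _ _)
  ext k
  induction k using Fin.lastCases with
  | last => simpa using ht
  | cast i =>
    have := hbox _ (Or.inr ⟨i, rfl⟩)
    rw [Fin.snoc_dotProduct_snoc, dotProduct_single, ht] at this
    simpa using this

end Omega

/-- For any finite posets `P` and `Q` on `d` elements, `Ω(O_P, C_Q)` is a
Gorenstein Fano (reflexive) polytope of dimension `d+1`: it is full-dimensional
in `ℝ^{d+1}`, the origin is its unique interior lattice point, and its dual
polytope is integral. -/
theorem Omega_order_chain_reflexive (d : ℕ) (P Q : PartialOrder (Fin d)) :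
    affineSpan ℝ (OmegaPoly (orderPolytope P.le) (chainPolytope Q.le)) = ⊤ ∧
    interior (OmegaPoly (orderPolytope P.le) (chainPolytope Q.le)) ∩
        {x : Fin (d + 1) → ℝ | IsLatticePoint x} = {0} ∧
    ∃ V : Finset (Fin (d + 1) → ℝ), (∀ v ∈ V, IsLatticePoint v) ∧
      dualPoly (OmegaPoly (orderPolytope P.le) (chainPolytope Q.le)) =
        convexHull ℝ (V : Set (Fin (d + 1) → ℝ)) := by
  have hW : (omegaNormals P.le Q.le).Finite := omegaNormals_finite
  have h0 := zero_mem_interior_dualPoly hW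
  rw [OmegaPoly_eq_dualPoly_omegaNormals P.toPreorder]
  refine ⟨?_, ?_, hW.toFinset, fun v hv => omegaNormals_subset_latticePoints (hW.mem_toFinset.1 hv),
    ?_⟩
  · exact affineSpan_eq_top_of_nonempty_interior ⟨0, by rwa [(convex_dualPoly _).convexHull_eq]⟩
  · exact Set.eq_singleton_iff_unique_mem.2 ⟨⟨h0, fun _ => ⟨0, by simp⟩⟩,
      fun z hz => eq_zero_of_mem_interior_dualPoly_omegaNormals hz.1 hz.2⟩
  · rw [hW.coe_toFinset, dualPoly_dualPoly_of_finite hW zero_mem_convexHull_omegaNormals]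
end

section
/- For any finite posets P and Q on d elements, Ω(C_P, C_Q) is a normal polytope: every lattice point of N·Ω(C_P,C_Q) is a sum of N lattice points of Ω(C_P,C_Q). -/
open scoped Pointwise

/-!
A point of `N • Ω(C_P, C_Q)` is `α • (p, 1) + β • (-q, -1)` with `α + β = N`, `p ∈ C_P`,
`q ∈ C_Q`. If it is a lattice point `(z, α - β)`, the positive part of `z` is bounded by `α • p`
and its negative part by `β • q`, so their sums along maximal chains are at most `⌊α⌋` and `⌊β⌋`;
and `⌊α⌋ - ⌊β⌋ = α - β` because `α - β` is an integer.

Chain polytopes have the integer decomposition property: a nonnegative integer vector whose sums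
along maximal chains are at most `k` is a sum of `k` indicator vectors of antichains, found by
repeatedly removing the minimal elements of its support (every chain of maximal weight passes
through one of them). Lifting these `⌊α⌋ + ⌊β⌋ ≤ N` points to `Ω` and padding with copies of
`0 = ½ • (0, 1) + ½ • (0, -1)` gives the `N` points.
-/

lemma IsLatticePoint.neg {n : ℕ} {x : Fin n → ℝ} (hx : IsLatticePoint x) :
    IsLatticePoint (-x) := fun i => (hx i).elim fun z hz => ⟨-z, by simp [hz]⟩

lemma IsLatticePoint.snoc {n : ℕ} {x : Fin n → ℝ} (hx : IsLatticePoint x) (z : ℤ) :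
    IsLatticePoint (Fin.snoc x (z : ℝ) : Fin (n + 1) → ℝ) :=
  Fin.lastCases ⟨z, by simp⟩ fun i => (hx i).imp fun w hw => by simp [hw]

lemma Fin.snoc_sum {n N : ℕ} (x : Fin N → Fin n → ℝ) (c : Fin N → ℝ) :
    (Fin.snoc (∑ k, x k) (∑ k, c k) : Fin (n + 1) → ℝ) = ∑ k, Fin.snoc (x k) (c k) := by
  funext i
  refine Fin.lastCases ?_ (fun j => ?_) i <;> simp [Finset.sum_apply]

def IsLatticeSum {n : ℕ} (S : Set (Fin n → ℝ)) (N : ℕ) (a : Fin n → ℝ) : Prop :=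
  ∃ f : Fin N → (Fin n → ℝ), (∀ k, f k ∈ S ∧ IsLatticePoint (f k)) ∧ a = ∑ k, f k

namespace IsLatticeSum

variable {n : ℕ} {S : Set (Fin n → ℝ)}

lemma zero (h0 : 0 ∈ S) (N : ℕ) : IsLatticeSum S N 0 :=
  ⟨0, fun _ => ⟨h0, fun _ => ⟨0, by simp⟩⟩, by simp⟩

lemma single {u : Fin n → ℝ} (hu : u ∈ S) (hu' : IsLatticePoint u) : IsLatticeSum S 1 u :=
  ⟨fun _ => u, fun _ => ⟨hu, hu'⟩, by simp⟩

lemma add {M N : ℕ} {a b : Fin n → ℝ} (ha : IsLatticeSum S M a) (hb : IsLatticeSum S N b) :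
    IsLatticeSum S (M + N) (a + b) := by
  obtain ⟨f, hf, rfl⟩ := ha
  obtain ⟨g, hg, rfl⟩ := hb
  exact ⟨Fin.append f g, Fin.addCases (by simpa using hf) (by simpa using hg), by
    simp [Fin.sum_univ_add]⟩

end IsLatticeSum

lemma IsChain.exists_isMaxChain_finset {α : Type*} [Finite α] {r : α → α → Prop} {s : Set α}
    (hs : IsChain r s) : ∃ c : Finset α, IsMaxChain r ↑c ∧ s ⊆ ↑c := by
  obtain ⟨M, hM, hsM⟩ := hs.exists_maxChain
  exact ⟨M.toFinite.toFinset, by simpa using hM, by simpa using hsM⟩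

section ChainPolytope

variable {d : ℕ}

lemma zero_mem_chainPolytope_s11 (r : Fin d → Fin d → Prop) : 0 ∈ chainPolytope r :=
  ⟨fun _ => le_rfl, fun _ _ => by simp⟩

lemma convex_chainPolytope (r : Fin d → Fin d → Prop) : Convex ℝ (chainPolytope r) := by
  rintro x ⟨hx₀, hx₁⟩ y ⟨hy₀, hy₁⟩ a b ha hb hab
  refine ⟨fun i => ?_, fun c hc => ?_⟩
  · simp only [Pi.add_apply, Pi.smul_apply, smul_eq_mul]
    nlinarith [hx₀ i, hy₀ i]
  · simp only [Pi.add_apply, Pi.smul_apply, smul_eq_mul, Finset.sum_add_distrib, ← Finset.mul_sum]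
    nlinarith [hx₁ c hc, hy₁ c hc]

lemma indicator_mem_chainPolytope {r : Fin d → Fin d → Prop} {A : Finset (Fin d)}
    (hA : IsAntichain r ↑A) : (fun i => if i ∈ A then (1 : ℝ) else 0) ∈ chainPolytope r := by
  refine ⟨fun i => by positivity, fun c hc => ?_⟩
  rw [Finset.sum_boole, Finset.filter_mem_eq_inter, Nat.cast_le_one,
    Finset.card_le_one_iff_subsingleton, Finset.coe_inter]
  exact inter_subsingleton_of_isChain_of_isAntichain hc.isChain hA

lemma sum_toNat_le_floor {r : Fin d → Fin d → Prop} {p : Fin d → ℝ} {α : ℝ} {z : Fin d → ℤ}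
    (hp : p ∈ chainPolytope r) (hα : 0 ≤ α) (hz : ∀ i, (z i : ℝ) ≤ α * p i)
    {c : Finset (Fin d)} (hc : IsMaxChain r ↑c) : ∑ i ∈ c, (z i).toNat ≤ ⌊α⌋₊ := by
  refine Nat.le_floor ?_
  push_cast
  calc ∑ i ∈ c, ((z i).toNat : ℝ) ≤ ∑ i ∈ c, α * p i := Finset.sum_le_sum fun i _ => by
        rw [← Int.cast_natCast, Int.toNat_eq_max, Int.cast_max, Int.cast_zero]
        exact max_le (hz i) (mul_nonneg hα (hp.1 i))
    _ = α * ∑ i ∈ c, p i := (Finset.mul_sum ..).symm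
    _ ≤ α := mul_le_of_le_one_right hα (hp.2 c hc)

end ChainPolytope

section MinimalSupport

variable {d : ℕ} (P : PartialOrder (Fin d))

open Classical in
noncomputable def minimalSupport (x : Fin d → ℕ) : Finset (Fin d) :=
  {i | x i ≠ 0 ∧ ∀ j, x j ≠ 0 → P.le j i → j = i}

variable {P}

lemma mem_minimalSupport {x : Fin d → ℕ} {i : Fin d} :
    i ∈ minimalSupport P x ↔ x i ≠ 0 ∧ ∀ j, x j ≠ 0 → P.le j i → j = i := by
  simp [minimalSupport]

lemma isAntichain_minimalSupport (x : Fin d → ℕ) : IsAntichain P.le ↑(minimalSupport P x) :=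
  fun _ hi _ hj hne hij => hne ((mem_minimalSupport.1 hj).2 _ (mem_minimalSupport.1 hi).1 hij)

lemma exists_mem_minimalSupport_of_isMaxChain {x : Fin d → ℕ} {c : Finset (Fin d)}
    (hc : IsMaxChain P.le ↑c)
    (hmax : ∀ c' : Finset (Fin d), IsMaxChain P.le ↑c' → ∑ i ∈ c', x i ≤ ∑ i ∈ c, x i)
    (hpos : ∑ i ∈ c, x i ≠ 0) : ∃ i ∈ c, i ∈ minimalSupport P x := by
  classical
  obtain ⟨i, hi, hmin⟩ := @Finset.exists_minimal _ P.toLE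
    ⟨fun _ _ _ h h' => P.le_trans _ _ _ h' h⟩ {i ∈ c | x i ≠ 0}
    (Finset.filter_nonempty_iff.2 (Finset.exists_ne_zero_of_sum_ne_zero hpos))
  simp only [Finset.mem_filter] at hi hmin
  obtain ⟨hic, hxi⟩ := hi
  refine ⟨i, hic, mem_minimalSupport.2 ⟨hxi, fun j hxj hji => ?_⟩⟩
  -- Otherwise `j` followed by the part of `c` above `i` is a chain heavier than `c`.
  by_contra hne
  set c' := {t ∈ c | P.le i t}
  have hjc' : j ∉ c' := fun h => hne (P.le_antisymm _ _ hji (Finset.mem_filter.1 h).2)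
  have hchain : IsChain P.le (insert j (c' : Set (Fin d))) :=
    (hc.isChain.mono (Finset.coe_subset.2 (Finset.filter_subset _ _))).insert fun t ht _ =>
      Or.inl (P.le_trans _ _ _ hji (Finset.mem_filter.1 ht).2)
  obtain ⟨M, hM, hsub⟩ := hchain.exists_isMaxChain_finset
  have hc' : ∑ t ∈ c', x t = ∑ t ∈ c, x t := Finset.sum_filter_of_ne fun t ht hxt => by
    rcases eq_or_ne t i with rfl | hti
    · exact P.le_refl t
    · exact (hc.isChain ht hic hti).elim (hmin ⟨ht, hxt⟩) id
  have hweight : x j + ∑ t ∈ c, x t ≤ ∑ t ∈ c, x t :=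
    calc x j + ∑ t ∈ c, x t = ∑ t ∈ insert j c', x t := by rw [Finset.sum_insert hjc', hc']
      _ ≤ ∑ t ∈ M, x t :=
        Finset.sum_le_sum_of_subset (by rwa [← Finset.coe_subset, Finset.coe_insert])
      _ ≤ ∑ t ∈ c, x t := hmax M hM
  exact hxj (by simpa using hweight)

lemma sum_sub_indicator_minimalSupport_le {x : Fin d → ℕ} {k : ℕ}
    (hx : ∀ c : Finset (Fin d), IsMaxChain P.le ↑c → ∑ i ∈ c, x i ≤ k + 1)
    {c : Finset (Fin d)} (hc : IsMaxChain P.le ↑c) :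
    ∑ i ∈ c, (x i - if i ∈ minimalSupport P x then 1 else 0) ≤ k := by
  rw [Finset.sum_tsub_distrib _ fun i _ => ?_]
  · by_cases h : ∑ i ∈ c, x i ≤ k
    · omega
    · obtain ⟨i, hic, hiA⟩ := exists_mem_minimalSupport_of_isMaxChain hc
        (fun c' hc' => (hx c' hc').trans (by omega)) (by omega)
      have : 1 ≤ ∑ j ∈ c, if j ∈ minimalSupport P x then 1 else 0 := by
        simpa [hiA] using Finset.single_le_sum
          (f := fun j => if j ∈ minimalSupport P x then 1 else 0) (fun _ _ => Nat.zero_le _) hic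
      have := hx c hc
      omega
  · split_ifs with h
    · exact Nat.one_le_iff_ne_zero.2 (mem_minimalSupport.1 h).1
    · exact Nat.zero_le _

theorem isLatticeSum_chainPolytope (k : ℕ) (x : Fin d → ℕ)
    (hx : ∀ c : Finset (Fin d), IsMaxChain P.le ↑c → ∑ i ∈ c, x i ≤ k) :
    IsLatticeSum (chainPolytope P.le) k (fun i => (x i : ℝ)) := by
  induction k generalizing x with
  | zero =>
    have hx₀ : (fun i => (x i : ℝ)) = 0 := funext fun i => by
      obtain ⟨c, hc, hic⟩ :=
        (Set.subsingleton_singleton (a := i)).isChain.exists_isMaxChain_finset (r := P.le)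
      simpa using Nat.eq_zero_of_le_zero
        ((Finset.single_le_sum (fun _ _ => Nat.zero_le _) (hic rfl)).trans (hx c hc))
    exact hx₀ ▸ IsLatticeSum.zero (zero_mem_chainPolytope_s11 P.le) 0
  | succ k ih =>
    set A := minimalSupport P x
    have hsplit : (fun i => (x i : ℝ)) =
        (fun i => ((x i - if i ∈ A then 1 else 0 : ℕ) : ℝ)) + fun i => if i ∈ A then 1 else 0 := by
      funext i
      by_cases h : i ∈ A
      · simp [h, Nat.cast_sub (Nat.one_le_iff_ne_zero.2 (mem_minimalSupport.1 h).1)]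
      · simp [h]
    rw [hsplit]
    exact (ih _ fun c hc => sum_sub_indicator_minimalSupport_le hx hc).add
      (IsLatticeSum.single (indicator_mem_chainPolytope (isAntichain_minimalSupport x))
        fun i => ⟨if i ∈ A then 1 else 0, by split_ifs <;> simp⟩)

end MinimalSupport

section OmegaPoly

variable {d : ℕ} {A B : Set (Fin d → ℝ)}

lemma Convex.image_snoc_smul {s : Set (Fin d → ℝ)} (hs : Convex ℝ s) (ε : ℝ) :
    Convex ℝ ((fun x => (Fin.snoc (ε • x) ε : Fin (d + 1) → ℝ)) '' s) := by
  rintro _ ⟨x, hx, rfl⟩ _ ⟨y, hy, rfl⟩ a b ha hb hab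
  refine ⟨a • x + b • y, hs hx hy ha hb hab, ?_⟩
  funext i
  refine Fin.lastCases ?_ (fun j => ?_) i
  · simp only [Fin.snoc_last, Pi.add_apply, Pi.smul_apply, smul_eq_mul]
    linear_combination ε * hab.symm
  · simp only [Fin.snoc_castSucc, Pi.add_apply, Pi.smul_apply, smul_eq_mul]
    ring

lemma omegaPoly_eq_convexJoin (hA : Convex ℝ A) (hB : Convex ℝ B) (hA₀ : A.Nonempty)
    (hB₀ : B.Nonempty) :
    OmegaPoly A B = convexJoin ℝ ((fun x => Fin.snoc x (1 : ℝ)) '' A)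
      ((fun x => Fin.snoc (-x) (-1 : ℝ)) '' B) := by
  have hA' := hA.image_snoc_smul 1
  have hB' := hB.image_snoc_smul (-1)
  simp only [one_smul, neg_smul] at hA' hB'
  rw [OmegaPoly, convexHull_union (hA₀.image _) (hB₀.image _), hA'.convexHull_eq,
    hB'.convexHull_eq]

lemma exists_of_mem_smul_omegaPoly (hA : Convex ℝ A) (hB : Convex ℝ B) (hA₀ : A.Nonempty)
    (hB₀ : B.Nonempty) {t : ℝ} (ht : 0 ≤ t) {a : Fin (d + 1) → ℝ}
    (ha : a ∈ t • OmegaPoly A B) :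
    ∃ α β : ℝ, ∃ p ∈ A, ∃ q ∈ B, 0 ≤ α ∧ 0 ≤ β ∧ α + β = t ∧
      a = Fin.snoc (α • p - β • q) (α - β) := by
  obtain ⟨w, hw, rfl⟩ := ha
  rw [omegaPoly_eq_convexJoin hA hB hA₀ hB₀, mem_convexJoin] at hw
  obtain ⟨_, ⟨p, hp, rfl⟩, _, ⟨q, hq, rfl⟩, s, u, hs, hu, hsu, rfl⟩ := hw
  refine ⟨t * s, t * u, p, hp, q, hq, by positivity, by positivity, by
    rw [← mul_add, hsu, mul_one], ?_⟩
  funext i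
  refine Fin.lastCases ?_ (fun j => ?_) i <;>
    simp only [Pi.smul_apply, Pi.add_apply, Pi.sub_apply, Pi.neg_apply, Fin.snoc_last,
      Fin.snoc_castSucc, smul_eq_mul] <;> ring

lemma snoc_mem_omegaPoly {p : Fin d → ℝ} (hp : p ∈ A) :
    (Fin.snoc p 1 : Fin (d + 1) → ℝ) ∈ OmegaPoly A B :=
  subset_convexHull ℝ _ (Or.inl ⟨p, hp, rfl⟩)

lemma snoc_neg_mem_omegaPoly {q : Fin d → ℝ} (hq : q ∈ B) :
    (Fin.snoc (-q) (-1) : Fin (d + 1) → ℝ) ∈ OmegaPoly A B :=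
  subset_convexHull ℝ _ (Or.inr ⟨q, hq, rfl⟩)

lemma zero_mem_omegaPoly (hA : 0 ∈ A) (hB : 0 ∈ B) : 0 ∈ OmegaPoly A B := by
  have hmid : (0 : Fin (d + 1) → ℝ) =
      (1 / 2 : ℝ) • Fin.snoc 0 1 + (1 / 2 : ℝ) • Fin.snoc (-0) (-1) := by
    funext i
    refine Fin.lastCases ?_ (fun j => ?_) i <;> simp
  rw [hmid]
  exact convex_convexHull ℝ _ (snoc_mem_omegaPoly hA) (snoc_neg_mem_omegaPoly hB)
    (by norm_num) (by norm_num) (by norm_num)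

lemma IsLatticeSum.omegaPoly_snoc (B : Set (Fin d → ℝ)) {N : ℕ} {x : Fin d → ℝ}
    (h : IsLatticeSum A N x) : IsLatticeSum (OmegaPoly A B) N (Fin.snoc x N) := by
  obtain ⟨f, hf, rfl⟩ := h
  refine ⟨fun k => Fin.snoc (f k) 1, fun k => ⟨snoc_mem_omegaPoly (hf k).1, ?_⟩, ?_⟩
  · simpa using (hf k).2.snoc 1
  · rw [← Fin.snoc_sum]
    simp

lemma IsLatticeSum.omegaPoly_snoc_neg (A : Set (Fin d → ℝ)) {N : ℕ} {x : Fin d → ℝ}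
    (h : IsLatticeSum B N x) : IsLatticeSum (OmegaPoly A B) N (Fin.snoc (-x) (-N)) := by
  obtain ⟨f, hf, rfl⟩ := h
  refine ⟨fun k => Fin.snoc (-f k) (-1), fun k => ⟨snoc_neg_mem_omegaPoly (hf k).1, ?_⟩, ?_⟩
  · simpa using (hf k).2.neg.snoc (-1)
  · rw [← Fin.snoc_sum]
    simp

lemma IsLatticeSum.omegaPoly_snoc_sub (hA : 0 ∈ A) (hB : 0 ∈ B) {k l N : ℕ} (hN : k + l ≤ N)
    {x y : Fin d → ℝ} (hx : IsLatticeSum A k x) (hy : IsLatticeSum B l y) :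
    IsLatticeSum (OmegaPoly A B) N (Fin.snoc (x - y) ((k : ℝ) - l)) := by
  obtain ⟨r, rfl⟩ := Nat.exists_eq_add_of_le hN
  convert ((hx.omegaPoly_snoc B).add (hy.omegaPoly_snoc_neg A)).add
    (zero (zero_mem_omegaPoly hA hB) r) using 1
  funext i
  refine Fin.lastCases ?_ (fun j => ?_) i <;> simp [sub_eq_add_neg]

end OmegaPoly

lemma floor_sub_floor_of_sub_eq_intCast {α β : ℝ} (hα : 0 ≤ α) (hβ : 0 ≤ β) {m : ℤ}
    (h : α - β = m) : (⌊α⌋₊ : ℝ) - ⌊β⌋₊ = α - β := by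
  have : ⌊α⌋ = ⌊β⌋ + m := by rw [← Int.floor_add_intCast, ← h, add_sub_cancel]
  rw [← Int.natCast_floor_eq_floor hα, ← Int.natCast_floor_eq_floor hβ] at this
  rw [h]
  exact_mod_cast (by omega : (⌊α⌋₊ : ℤ) - ⌊β⌋₊ = m)

/-- For any finite posets `P` and `Q` on `d` elements, `Ω(C_P, C_Q)` is a
normal polytope: every lattice point of `N·Ω(C_P, C_Q)` is a sum of `N`
lattice points of `Ω(C_P, C_Q)`. -/
theorem Omega_chain_chain_normal (d : ℕ) (P Q : PartialOrder (Fin d)) :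
    ∀ N : ℕ, 0 < N → ∀ a : Fin (d + 1) → ℝ, IsLatticePoint a →
      a ∈ (N : ℝ) • OmegaPoly (chainPolytope P.le) (chainPolytope Q.le) →
      ∃ f : Fin N → (Fin (d + 1) → ℝ),
        (∀ k, f k ∈ OmegaPoly (chainPolytope P.le) (chainPolytope Q.le) ∧
          IsLatticePoint (f k)) ∧ a = ∑ k, f k := by
  intro N _ a ha hmem
  obtain ⟨α, β, p, hp, q, hq, hα, hβ, hαβ, rfl⟩ := exists_of_mem_smul_omegaPoly
    (convex_chainPolytope P.le) (convex_chainPolytope Q.le) ⟨0, zero_mem_chainPolytope_s11 _⟩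
    ⟨0, zero_mem_chainPolytope_s11 _⟩ N.cast_nonneg hmem
  choose z hz using ha
  have hzi (i : Fin d) : (z i.castSucc : ℝ) = α * p i - β * q i := by
    simpa using (hz i.castSucc).symm
  have hzl : α - β = z (Fin.last d) := by simpa using hz (Fin.last d)
  have hP := isLatticeSum_chainPolytope ⌊α⌋₊ (fun i => (z i.castSucc).toNat) fun c hc =>
    sum_toNat_le_floor hp hα (fun i => by linarith [hzi i, mul_nonneg hβ (hq.1 i)]) hc
  have hQ := isLatticeSum_chainPolytope ⌊β⌋₊ (fun i => (-z i.castSucc).toNat) fun c hc =>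
    sum_toNat_le_floor hq hβ (fun i => by push_cast; linarith [hzi i, mul_nonneg hα (hp.1 i)]) hc
  have hN : ⌊α⌋₊ + ⌊β⌋₊ ≤ N := by
    exact_mod_cast hαβ ▸ add_le_add (Nat.floor_le hα) (Nat.floor_le hβ)
  have hsplit : α • p - β • q =
      (fun i => ((z i.castSucc).toNat : ℝ)) - fun i => ((-z i.castSucc).toNat : ℝ) := by
    funext j
    have := congrArg (Int.cast : ℤ → ℝ) (Int.toNat_sub_toNat_neg (z j.castSucc))
    push_cast at this
    simp only [Pi.sub_apply, Pi.smul_apply, smul_eq_mul]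
    linarith [hzi j]
  rw [hsplit, ← floor_sub_floor_of_sub_eq_intCast hα hβ hzl]
  exact hP.omegaPoly_snoc_sub (zero_mem_chainPolytope_s11 _) (zero_mem_chainPolytope_s11 _) hN hQ
end

section
/- With P' = {p_{d+1}} ⊕ P and Q' = {q_{d+1}} ⊕ Q, the polytope Ω(O_P, O_Q) equals Γ(O_{P'}, O_{Q'}) = conv(O_{P'} ∪ (−O_{Q'})), after identifying ℝ^{d+1} with coordinates indexed by {1,...,d, d+1} where the last coordinate corresponds to the new minimum element. -/
open scoped Pointwise

/-- `Γ(𝒫,𝒬) = conv(𝒫 ∪ (−𝒬))`. -/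
def GammaPoly {n : ℕ} (A B : Set (Fin n → ℝ)) : Set (Fin n → ℝ) :=
  convexHull ℝ (A ∪ (-B))

/-- The order relation of the ordinal sum `{p_{d+1}} ⊕ P`, the new minimum
being the last coordinate. -/
def ordSumMinLe {d : ℕ} (r : Fin d → Fin d → Prop) :
    Fin (d + 1) → Fin (d + 1) → Prop :=
  fun a b => a = Fin.last d ∨
    ∃ i j : Fin d, a = Fin.castSucc i ∧ b = Fin.castSucc j ∧ r i j

lemma zero_mem_orderPolytope {d : ℕ} (r : Fin d → Fin d → Prop) :
    (0 : Fin d → ℝ) ∈ orderPolytope r := by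
  refine ⟨fun i => by norm_num, fun i j _ => le_rfl⟩

lemma snoc_one_mem {d : ℕ} (r : Fin d → Fin d → Prop) {x : Fin d → ℝ}
    (hx : x ∈ orderPolytope r) :
    (Fin.snoc x (1 : ℝ)) ∈ orderPolytope (ordSumMinLe r) := by
  constructor
  · intro i
    refine Fin.lastCases ?_ ?_ i
    · simp
    · intro j; simpa using hx.1 j
  · intro i j hij
    rcases hij with h | ⟨a, b, ha, hb, hab⟩
    · subst h
      refine Fin.lastCases ?_ ?_ j
      · simp
      · intro b; simpa using (hx.1 b).2
    · subst ha; subst hb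
      simpa using hx.2 a b hab

lemma key_decomp {d : ℕ} (r : Fin d → Fin d → Prop) {x : Fin (d + 1) → ℝ}
    (hx : x ∈ orderPolytope (ordSumMinLe r)) :
    ∃ (lam : ℝ) (y : Fin d → ℝ), 0 ≤ lam ∧ lam ≤ 1 ∧ y ∈ orderPolytope r ∧
      x = lam • (Fin.snoc y 1 : Fin (d+1) → ℝ) + (1 - lam) • (Fin.snoc (0 : Fin d → ℝ) (-1) : Fin (d+1) → ℝ) := by
  set t := x (Fin.last d) with ht
  have ht0 : 0 ≤ t := (hx.1 _).1
  have ht1 : t ≤ 1 := (hx.1 _).2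
  have hle : ∀ i : Fin d, x (Fin.castSucc i) ≤ t :=
    fun i => hx.2 (Fin.last d) (Fin.castSucc i) (Or.inl rfl)
  set lam : ℝ := (t + 1) / 2 with hlam
  have hlam0 : (0 : ℝ) < lam := by rw [hlam]; linarith
  refine ⟨lam, fun i => x (Fin.castSucc i) / lam, by linarith, by rw [hlam]; linarith, ?_, ?_⟩
  · constructor
    · intro i
      constructor
      · exact div_nonneg (hx.1 _).1 hlam0.le
      · rw [div_le_one hlam0]
        have := hle i
        rw [hlam]; linarith
    · intro i j hij
      have : x (Fin.castSucc j) ≤ x (Fin.castSucc i) :=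
        hx.2 _ _ (Or.inr ⟨i, j, rfl, rfl, hij⟩)
      show x (Fin.castSucc j) / lam ≤ x (Fin.castSucc i) / lam
      exact (div_le_div_iff_of_pos_right hlam0).mpr this
  · funext i
    refine Fin.lastCases ?_ ?_ i
    · simp only [Pi.add_apply, Pi.smul_apply, Fin.snoc_last, smul_eq_mul]
      rw [hlam]; ring
    · intro j
      simp only [Pi.add_apply, Pi.smul_apply, Fin.snoc_castSucc, smul_eq_mul, Pi.zero_apply,
        mul_zero, add_zero]
      rw [mul_div_cancel₀ _ hlam0.ne']

/-- With `P' = {p_{d+1}} ⊕ P` and `Q' = {q_{d+1}} ⊕ Q`, one has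
`Ω(O_P, O_Q) = Γ(O_{P'}, O_{Q'})`, identifying the extra coordinate of
`ℝ^{d+1}` with the new minimum element. -/
theorem Omega_order_order_eq_Gamma (d : ℕ) (P Q : PartialOrder (Fin d)) :
    OmegaPoly (orderPolytope P.le) (orderPolytope Q.le) =
      GammaPoly (orderPolytope (ordSumMinLe P.le))
        (orderPolytope (ordSumMinLe Q.le)) := by
  unfold OmegaPoly GammaPoly
  apply Set.Subset.antisymm
  · apply convexHull_min ?_ (convex_convexHull ℝ _)
    apply Set.Subset.trans ?_ (subset_convexHull ℝ _)
    rintro z (⟨x, hx, rfl⟩ | ⟨x, hx, rfl⟩)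
    · exact Or.inl (snoc_one_mem P.le hx)
    · refine Or.inr ?_
      rw [Set.mem_neg]
      have : -(Fin.snoc (-x) (-1) : Fin (d+1) → ℝ) = (Fin.snoc x 1 : Fin (d+1) → ℝ) := by
        funext i
        refine Fin.lastCases ?_ ?_ i <;> simp
      rw [this]
      exact snoc_one_mem Q.le hx
  · apply convexHull_min ?_ (convex_convexHull ℝ _)
    rintro z (hz | hz)
    · obtain ⟨lam, y, h0, h1, hy, hz⟩ := key_decomp P.le hz
      rw [hz]
      have hS : Convex ℝ (convexHull ℝ (((fun x : Fin d → ℝ => (Fin.snoc x 1 : Fin (d+1) → ℝ)) '' orderPolytope P.le) ∪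
          ((fun x : Fin d → ℝ => (Fin.snoc (-x) (-1) : Fin (d+1) → ℝ)) '' orderPolytope Q.le))) := convex_convexHull ℝ _
      refine hS ?_ ?_ h0 (by linarith) (by ring)
      · exact subset_convexHull ℝ _ (Or.inl ⟨y, hy, rfl⟩)
      · refine subset_convexHull ℝ _ (Or.inr ⟨0, zero_mem_orderPolytope Q.le, ?_⟩)
        simp
    · rw [Set.mem_neg] at hz
      obtain ⟨lam, y, h0, h1, hy, hz⟩ := key_decomp Q.le hz
      have hz' : z = lam • (Fin.snoc (-y) (-1) : Fin (d+1) → ℝ) + (1 - lam) • (Fin.snoc (0 : Fin d → ℝ) 1 : Fin (d+1) → ℝ) := by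
        have := congrArg Neg.neg hz
        rw [neg_neg] at this
        rw [this]
        funext i
        refine Fin.lastCases ?_ ?_ i <;> simp
        ring
      rw [hz']
      have hS : Convex ℝ (convexHull ℝ (((fun x : Fin d → ℝ => (Fin.snoc x 1 : Fin (d+1) → ℝ)) '' orderPolytope P.le) ∪
          ((fun x : Fin d → ℝ => (Fin.snoc (-x) (-1) : Fin (d+1) → ℝ)) '' orderPolytope Q.le))) := convex_convexHull ℝ _
      refine hS ?_ ?_ h0 (by linarith) (by ring)
      · exact subset_convexHull ℝ _ (Or.inr ⟨y, hy, rfl⟩)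
      · exact subset_convexHull ℝ _ (Or.inl ⟨0, zero_mem_orderPolytope P.le, rfl⟩)
end
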